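/- Soundness and completeness of the natural deduction system for the Logic of Assertibility and Deniability: for all L*-formulas φ₁, …, φₙ, ψ, we have φ₁, …, φₙ ⊢ ψ if and only if φ₁, …, φₙ ⊨ ψ. -/

import Mathlib

namespace LAD

/-- L-formulas: built from atoms by extensional connectives ⊃, ∩, ∪, ∼. -/
inductive LForm (A : Type) where
  | atom : A → LForm A
  | eimp : LForm A → LForm A → LForm A
  | econj : LForm A → LForm A → LForm A
  | edisj : LForm A → LForm A → LForm A
  | eneg : LForm A → LForm A

/-- L*-formulas: L-formulas closed under intensional connectives →, ∧, ∨, ¬. -/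
inductive SForm (A : Type) where
  | base : LForm A → SForm A
  | iimp : SForm A → SForm A → SForm A
  | iconj : SForm A → SForm A → SForm A
  | idisj : SForm A → SForm A → SForm A
  | ineg : SForm A → SForm A

variable {A : Type}

/-- A possible world: an assignment of truth values to atoms. -/
abbrev World (A : Type) := A → Bool

/-- A context is a (nonempty) set of possible worlds. -/
abbrev Context (A : Type) := Set (World A)

/-- Classical truth of an L-formula at a world. -/
def LForm.truth (w : World A) : LForm A → Bool
  | .atom a => w a
  | .eimp α β => !α.truth w || β.truth w
  | .econj α β => α.truth w && β.truth w
  | .edisj α β => α.truth w || β.truth w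
  | .eneg α => !α.truth w

/-- Assertibility and deniability conditions, as a pair (⊩⁺, ⊩⁻). -/
def SForm.sem : SForm A → Context A → Prop × Prop
  | .base α, C => (∀ w ∈ C, α.truth w = true, ∀ w ∈ C, α.truth w = false)
  | .ineg φ, C => ((φ.sem C).2, (φ.sem C).1)
  | .idisj φ ψ, C => ((φ.sem C).1 ∨ (ψ.sem C).1, (φ.sem C).2 ∧ (ψ.sem C).2)
  | .iconj φ ψ, C => ((φ.sem C).1 ∧ (ψ.sem C).1, (φ.sem C).2 ∨ (ψ.sem C).2)
  | .iimp φ ψ, C =>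
      (∀ D : Context A, D.Nonempty → D ⊆ C → (φ.sem D).1 → (ψ.sem D).1,
       ∃ D : Context A, D.Nonempty ∧ D ⊆ C ∧ (φ.sem D).1 ∧ (ψ.sem D).2)

/-- C ⊩⁺ φ : assertibility. -/
def Assert (C : Context A) (φ : SForm A) : Prop := (φ.sem C).1

/-- C ⊩⁻ φ : deniability. -/
def Deny (C : Context A) (φ : SForm A) : Prop := (φ.sem C).2

/-- Δ ⊨ ψ : assertibility-preserving consequence. -/
def Entails (Δ : Set (SForm A)) (ψ : SForm A) : Prop :=
  ∀ C : Context A, C.Nonempty → (∀ δ ∈ Δ, Assert C δ) → Assert C ψ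


/-- Whether an L*-formula contains an occurrence of intensional implication. -/
def SForm.hasImp : SForm A → Bool
  | .base _ => false
  | .iimp _ _ => true
  | .iconj φ ψ => φ.hasImp || ψ.hasImp
  | .idisj φ ψ => φ.hasImp || ψ.hasImp
  | .ineg φ => φ.hasImp

/-- Whether an L*-formula contains no intensional implication in the scope of
an intensional negation. -/
def SForm.noImpUnderNeg : SForm A → Bool
  | .base _ => true
  | .iimp φ ψ => φ.noImpUnderNeg && ψ.noImpUnderNeg
  | .iconj φ ψ => φ.noImpUnderNeg && ψ.noImpUnderNeg
  | .idisj φ ψ => φ.noImpUnderNeg && ψ.noImpUnderNeg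
  | .ineg φ => !φ.hasImp

/-- A formula is safe if it contains no → in the scope of ¬, or is an implication. -/
def Safe (φ : SForm A) : Prop :=
  φ.noImpUnderNeg = true ∨ ∃ ψ χ, φ = SForm.iimp ψ χ

/-- The safe formulas of a set of premises. -/
def safePart (Δ : Set (SForm A)) : Set (SForm A) := {δ ∈ Δ | Safe δ}

/-- ⊥ := p ∩ ∼p for a fixed atom p. -/
def botF (p : A) : SForm A := .base (.econj (.atom p) (.eneg (.atom p)))

/-- ◇φ := ¬(φ → ⊥). -/
def dia (p : A) (φ : SForm A) : SForm A := .ineg (.iimp φ (botF p))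

/-- Iterated extensional conjunction of a list (true if empty). -/
def bigEConj (p : A) : List (LForm A) → LForm A
  | [] => .eimp (.atom p) (.atom p)
  | h :: t => t.foldl LForm.econj h

/-- Iterated extensional disjunction of a list (false if empty). -/
def bigEDisj (p : A) : List (LForm A) → LForm A
  | [] => .econj (.atom p) (.eneg (.atom p))
  | h :: t => t.foldl LForm.edisj h

/-- Iterated intensional conjunction of a list (true if empty). -/
def bigIConj (p : A) : List (SForm A) → SForm A
  | [] => .base (.eimp (.atom p) (.atom p))
  | h :: t => t.foldl SForm.iconj h

/-- Iterated intensional disjunction of a list (⊥ if empty). -/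
def bigIDisj (p : A) : List (SForm A) → SForm A
  | [] => botF p
  | h :: t => t.foldl SForm.idisj h

/-- α₁ ⊕ … ⊕ αₙ := (α₁ ∪ … ∪ αₙ) ∧ (◇α₁ ∧ … ∧ ◇αₙ). -/
def oplus (p : A) (l : List (LForm A)) : SForm A :=
  .iconj (.base (bigEDisj p l)) (bigIConj p (l.map fun α => dia p (.base α)))

/-- σ_w : the canonical description of a world w (A finite). -/
noncomputable def sigmaW [Fintype A] [DecidableEq A] (p : A) (w : World A) : LForm A :=
  bigEConj p ((Finset.univ : Finset A).toList.map
    (fun a => if w a then LForm.atom a else .eneg (.atom a)))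

/-- μ_C := σ_{w₁} ⊕ … ⊕ σ_{wₙ} for a finite context C = {w₁,…,wₙ}. -/
noncomputable def mu [Fintype A] [DecidableEq A] (p : A) (C : Finset (World A)) : SForm A :=
  oplus p (C.toList.map (sigmaW p))

/-- ξ_X := μ_{C₁} ∨ … ∨ μ_{C_k} for a finite set X = {C₁,…,C_k} of contexts. -/
noncomputable def xi [Fintype A] [DecidableEq A] (p : A) (X : Finset (Finset (World A))) : SForm A :=
  bigIDisj p (X.toList.map (mu p))

/-- The Fitch-style natural deduction system. Round-bracket (restricted)
subproofs keep only the safe formulas of the ambient premises. -/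
inductive Deriv (p : A) : Set (SForm A) → SForm A → Prop where
  | hyp {Δ φ} : φ ∈ Δ → Deriv p Δ φ
  -- extensional rules
  | iEConj {Δ α β} : Deriv p Δ (.base α) → Deriv p Δ (.base β) →
      Deriv p Δ (.base (.econj α β))
  | eEConj₁ {Δ α β} : Deriv p Δ (.base (.econj α β)) → Deriv p Δ (.base α)
  | eEConj₂ {Δ α β} : Deriv p Δ (.base (.econj α β)) → Deriv p Δ (.base β)
  | iEDisj₁ {Δ α β} : Deriv p Δ (.base α) → Deriv p Δ (.base (.edisj α β))
  | iEDisj₂ {Δ α β} : Deriv p Δ (.base β) → Deriv p Δ (.base (.edisj α β))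
  | eEDisj {Δ α β γ} : Deriv p Δ (.base (.edisj α β)) →
      Deriv p (insert (.base α) (safePart Δ)) (.base γ) →
      Deriv p (insert (.base β) (safePart Δ)) (.base γ) →
      Deriv p Δ (.base γ)
  | iEImp {Δ α β} : Deriv p (insert (.base α) (safePart Δ)) (.base β) →
      Deriv p Δ (.base (.eimp α β))
  | eEImp {Δ α β} : Deriv p Δ (.base α) → Deriv p Δ (.base (.eimp α β)) →
      Deriv p Δ (.base β)
  | iENeg {Δ α} : Deriv p (insert (.base α) (safePart Δ)) (botF p) →
      Deriv p Δ (.base (.eneg α))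
  | eENeg₁ {Δ α} : Deriv p Δ (.base α) → Deriv p Δ (.base (.eneg α)) →
      Deriv p Δ (botF p)
  | eENeg₂ {Δ α} : Deriv p Δ (.base (.eneg (.eneg α))) → Deriv p Δ (.base α)
  -- intensional rules
  | iIConj {Δ φ ψ} : Deriv p Δ φ → Deriv p Δ ψ → Deriv p Δ (.iconj φ ψ)
  | eIConj₁ {Δ φ ψ} : Deriv p Δ (.iconj φ ψ) → Deriv p Δ φ
  | eIConj₂ {Δ φ ψ} : Deriv p Δ (.iconj φ ψ) → Deriv p Δ ψ
  | iIDisj₁ {Δ φ ψ} : Deriv p Δ φ → Deriv p Δ (.idisj φ ψ)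
  | iIDisj₂ {Δ φ ψ} : Deriv p Δ ψ → Deriv p Δ (.idisj φ ψ)
  | eIDisj {Δ φ ψ χ} : Deriv p Δ (.idisj φ ψ) →
      Deriv p (insert φ Δ) χ → Deriv p (insert ψ Δ) χ → Deriv p Δ χ
  | iIImp {Δ φ ψ} : Deriv p (insert φ (safePart Δ)) ψ → Deriv p Δ (.iimp φ ψ)
  | eIImp {Δ φ ψ} : Deriv p Δ φ → Deriv p Δ (.iimp φ ψ) → Deriv p Δ ψ
  | iINeg {Δ} {α : LForm A} : Deriv p (insert (.base α) (safePart Δ)) (botF p) →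
      Deriv p Δ (.ineg (.base α))
  | eINeg {Δ φ} : Deriv p Δ φ → Deriv p Δ (.ineg φ) → Deriv p Δ (botF p)
  | efq {Δ φ} : Deriv p Δ (botF p) → Deriv p Δ φ
  -- interaction rules
  | negNeg₁ {Δ φ} : Deriv p Δ (.ineg (.ineg φ)) → Deriv p Δ φ
  | negNeg₂ {Δ φ} : Deriv p Δ φ → Deriv p Δ (.ineg (.ineg φ))
  | negConj₁ {Δ φ ψ} : Deriv p Δ (.ineg (.iconj φ ψ)) →
      Deriv p Δ (.idisj (.ineg φ) (.ineg ψ))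
  | negConj₂ {Δ φ ψ} : Deriv p Δ (.idisj (.ineg φ) (.ineg ψ)) →
      Deriv p Δ (.ineg (.iconj φ ψ))
  | negDisj₁ {Δ φ ψ} : Deriv p Δ (.ineg (.idisj φ ψ)) →
      Deriv p Δ (.iconj (.ineg φ) (.ineg ψ))
  | negDisj₂ {Δ φ ψ} : Deriv p Δ (.iconj (.ineg φ) (.ineg ψ)) →
      Deriv p Δ (.ineg (.idisj φ ψ))
  | negImp₁ {Δ φ ψ} : Deriv p Δ (.ineg (.iimp φ ψ)) →
      Deriv p Δ (dia p (.iconj φ (.ineg ψ)))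
  | negImp₂ {Δ φ ψ} : Deriv p Δ (dia p (.iconj φ (.ineg ψ))) →
      Deriv p Δ (.ineg (.iimp φ ψ))
  | cem {Δ φ} : Deriv p Δ (.idisj (.iimp φ (botF p)) (dia p φ))
  | diaOplus {Δ} {l : List (LForm A)} : l ≠ [] →
      Deriv p Δ (bigIConj p (l.map fun α => dia p (.base α))) →
      Deriv p Δ (dia p (oplus p l))


/- ============ Stage 1: basic infrastructure ============ -/

section Infra
variable {p : A} {Δ Δ' : Set (SForm A)} {φ ψ χ : SForm A} {C D : Context A} {α β : LForm A}

lemma safe_base (α : LForm A) : Safe (SForm.base α) := Or.inl rfl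

lemma safe_iimp (φ ψ : SForm A) : Safe (SForm.iimp φ ψ) := Or.inr ⟨φ, ψ, rfl⟩

lemma mem_safePart (h : φ ∈ Δ) (hs : Safe φ) : φ ∈ safePart Δ := ⟨h, hs⟩

lemma safePart_subset : safePart Δ ⊆ Δ := fun _ h => h.1

lemma safePart_mono (h : Δ ⊆ Δ') : safePart Δ ⊆ safePart Δ' := fun _ hx => ⟨h hx.1, hx.2⟩

lemma safePart_insert_safe (hs : Safe φ) :
    safePart (insert φ Δ) = insert φ (safePart Δ) := by
  ext x
  constructor
  · rintro ⟨hx, hsx⟩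
    rcases hx with rfl | hx
    · exact Set.mem_insert _ _
    · exact Set.mem_insert_of_mem _ ⟨hx, hsx⟩
  · rintro (rfl | ⟨hx, hsx⟩)
    · exact ⟨Set.mem_insert _ _, hs⟩
    · exact ⟨Set.mem_insert_of_mem _ hx, hsx⟩

lemma Deriv.mono (h : Deriv p Δ φ) (hs : Δ ⊆ Δ') : Deriv p Δ' φ := by
  induction h generalizing Δ' with
  | hyp h => exact .hyp (hs h)
  | iEConj _ _ ih1 ih2 => exact .iEConj (ih1 hs) (ih2 hs)
  | eEConj₁ _ ih => exact .eEConj₁ (ih hs)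
  | eEConj₂ _ ih => exact .eEConj₂ (ih hs)
  | iEDisj₁ _ ih => exact .iEDisj₁ (ih hs)
  | iEDisj₂ _ ih => exact .iEDisj₂ (ih hs)
  | eEDisj _ _ _ ih ih1 ih2 =>
      exact .eEDisj (ih hs) (ih1 (Set.insert_subset_insert (safePart_mono hs)))
        (ih2 (Set.insert_subset_insert (safePart_mono hs)))
  | iEImp _ ih => exact .iEImp (ih (Set.insert_subset_insert (safePart_mono hs)))
  | eEImp _ _ ih1 ih2 => exact .eEImp (ih1 hs) (ih2 hs)
  | iENeg _ ih => exact .iENeg (ih (Set.insert_subset_insert (safePart_mono hs)))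
  | eENeg₁ _ _ ih1 ih2 => exact .eENeg₁ (ih1 hs) (ih2 hs)
  | eENeg₂ _ ih => exact .eENeg₂ (ih hs)
  | iIConj _ _ ih1 ih2 => exact .iIConj (ih1 hs) (ih2 hs)
  | eIConj₁ _ ih => exact .eIConj₁ (ih hs)
  | eIConj₂ _ ih => exact .eIConj₂ (ih hs)
  | iIDisj₁ _ ih => exact .iIDisj₁ (ih hs)
  | iIDisj₂ _ ih => exact .iIDisj₂ (ih hs)
  | eIDisj _ _ _ ih ih1 ih2 =>
      exact .eIDisj (ih hs) (ih1 (Set.insert_subset_insert hs))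
        (ih2 (Set.insert_subset_insert hs))
  | iIImp _ ih => exact .iIImp (ih (Set.insert_subset_insert (safePart_mono hs)))
  | eIImp _ _ ih1 ih2 => exact .eIImp (ih1 hs) (ih2 hs)
  | iINeg _ ih => exact .iINeg (ih (Set.insert_subset_insert (safePart_mono hs)))
  | eINeg _ _ ih1 ih2 => exact .eINeg (ih1 hs) (ih2 hs)
  | efq _ ih => exact .efq (ih hs)
  | negNeg₁ _ ih => exact .negNeg₁ (ih hs)
  | negNeg₂ _ ih => exact .negNeg₂ (ih hs)
  | negConj₁ _ ih => exact .negConj₁ (ih hs)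
  | negConj₂ _ ih => exact .negConj₂ (ih hs)
  | negDisj₁ _ ih => exact .negDisj₁ (ih hs)
  | negDisj₂ _ ih => exact .negDisj₂ (ih hs)
  | negImp₁ _ ih => exact .negImp₁ (ih hs)
  | negImp₂ _ ih => exact .negImp₂ (ih hs)
  | cem => exact .cem
  | diaOplus hne _ ih => exact .diaOplus hne (ih hs)

/-- Cut, via intensional disjunction elimination. -/
lemma Deriv.cut (h1 : Deriv p Δ χ) (h2 : Deriv p (insert χ Δ) φ) : Deriv p Δ φ :=
  .eIDisj (.iIDisj₁ h1) h2 h2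

end Infra

/- ============ Stage 2: semantics basics & soundness ============ -/

section Sem
variable {p : A} {Δ : Set (SForm A)} {φ ψ : SForm A} {C D : Context A} {α β : LForm A}

lemma assert_base : Assert C (.base α) ↔ ∀ w ∈ C, α.truth w = true := Iff.rfl
lemma deny_base : Deny C (.base α) ↔ ∀ w ∈ C, α.truth w = false := Iff.rfl
lemma assert_ineg : Assert C (.ineg φ) ↔ Deny C φ := Iff.rfl
lemma deny_ineg : Deny C (.ineg φ) ↔ Assert C φ := Iff.rfl
lemma assert_iconj : Assert C (.iconj φ ψ) ↔ Assert C φ ∧ Assert C ψ := Iff.rfl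
lemma deny_iconj : Deny C (.iconj φ ψ) ↔ Deny C φ ∨ Deny C ψ := Iff.rfl
lemma assert_idisj : Assert C (.idisj φ ψ) ↔ Assert C φ ∨ Assert C ψ := Iff.rfl
lemma deny_idisj : Deny C (.idisj φ ψ) ↔ Deny C φ ∧ Deny C ψ := Iff.rfl
lemma assert_iimp :
    Assert C (.iimp φ ψ) ↔ ∀ D : Context A, D.Nonempty → D ⊆ C → Assert D φ → Assert D ψ :=
  Iff.rfl
lemma deny_iimp :
    Deny C (.iimp φ ψ) ↔ ∃ D : Context A, D.Nonempty ∧ D ⊆ C ∧ Assert D φ ∧ Deny D ψ :=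
  Iff.rfl

lemma deny_botF : Deny C (botF p) := by
  intro w _
  simp [botF, LForm.truth]

lemma assert_botF (hC : C.Nonempty) (h : Assert C (botF p)) : False := by
  obtain ⟨w, hw⟩ := hC
  have := h w hw
  simp [botF, LForm.truth] at this

lemma assert_dia :
    Assert C (dia p φ) ↔ ∃ D : Context A, D.Nonempty ∧ D ⊆ C ∧ Assert D φ := by
  rw [dia, assert_ineg, deny_iimp]
  exact ⟨fun ⟨D, h1, h2, h3, _⟩ => ⟨D, h1, h2, h3⟩, fun ⟨D, h1, h2, h3⟩ => ⟨D, h1, h2, h3, deny_botF⟩⟩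

lemma truth_foldl_edisj {t : List (LForm A)} {acc : LForm A} {w : World A} :
    (t.foldl .edisj acc).truth w = true ↔ acc.truth w = true ∨ ∃ α ∈ t, α.truth w = true := by
  induction t generalizing acc with
  | nil => simp
  | cons h t ih =>
      simp only [List.foldl_cons, ih, LForm.truth, Bool.or_eq_true, List.mem_cons]
      constructor
      · rintro ((h1 | h1) | ⟨α, h1, h2⟩)
        · exact Or.inl h1
        · exact Or.inr ⟨h, Or.inl rfl, h1⟩
        · exact Or.inr ⟨α, Or.inr h1, h2⟩
      · rintro (h1 | ⟨α, (rfl | h1), h2⟩)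
        · exact Or.inl (Or.inl h1)
        · exact Or.inl (Or.inr h2)
        · exact Or.inr ⟨α, h1, h2⟩

lemma truth_bigEDisj {L : List (LForm A)} {w : World A} :
    (bigEDisj p L).truth w = true ↔ ∃ α ∈ L, α.truth w = true := by
  cases L with
  | nil => simp [bigEDisj, LForm.truth]
  | cons h t =>
      rw [bigEDisj, truth_foldl_edisj]
      simp only [List.mem_cons]
      constructor
      · rintro (h1 | ⟨α, h1, h2⟩)
        · exact ⟨h, Or.inl rfl, h1⟩
        · exact ⟨α, Or.inr h1, h2⟩
      · rintro ⟨α, (rfl | h1), h2⟩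
        · exact Or.inl h2
        · exact Or.inr ⟨α, h1, h2⟩

lemma truth_foldl_econj {t : List (LForm A)} {acc : LForm A} {w : World A} :
    (t.foldl .econj acc).truth w = true ↔ acc.truth w = true ∧ ∀ α ∈ t, α.truth w = true := by
  induction t generalizing acc with
  | nil => simp
  | cons h t ih =>
      simp only [List.foldl_cons, ih, LForm.truth, Bool.and_eq_true, List.mem_cons]
      constructor
      · rintro ⟨⟨h1, h2⟩, h3⟩
        exact ⟨h1, fun α hα => hα.elim (fun e => e ▸ h2) (h3 α)⟩
      · rintro ⟨h1, h2⟩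
        exact ⟨⟨h1, h2 h (Or.inl rfl)⟩, fun α hα => h2 α (Or.inr hα)⟩

lemma truth_bigEConj {L : List (LForm A)} {w : World A} :
    (bigEConj p L).truth w = true ↔ ∀ α ∈ L, α.truth w = true := by
  cases L with
  | nil => simp [bigEConj, LForm.truth]
  | cons h t =>
      rw [bigEConj, truth_foldl_econj]
      simp only [List.mem_cons]
      constructor
      · rintro ⟨h1, h2⟩ α (rfl | hα)
        · exact h1
        · exact h2 α hα
      · intro h1
        exact ⟨h1 h (Or.inl rfl), fun α hα => h1 α (Or.inr hα)⟩

lemma assert_foldl_iconj {t : List (SForm A)} {acc : SForm A} {C : Context A} :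
    Assert C (t.foldl .iconj acc) ↔ Assert C acc ∧ ∀ θ ∈ t, Assert C θ := by
  induction t generalizing acc with
  | nil => simp
  | cons h t ih =>
      simp only [List.foldl_cons, ih, List.mem_cons, assert_iconj]
      constructor
      · rintro ⟨⟨h1, h2⟩, h3⟩
        exact ⟨h1, fun θ hθ => hθ.elim (fun e => e ▸ h2) (h3 θ)⟩
      · rintro ⟨h1, h2⟩
        exact ⟨⟨h1, h2 h (Or.inl rfl)⟩, fun θ hθ => h2 θ (Or.inr hθ)⟩

lemma assert_bigIConj {L : List (SForm A)} {C : Context A} :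
    Assert C (bigIConj p L) ↔ ∀ θ ∈ L, Assert C θ := by
  cases L with
  | nil =>
      simp only [bigIConj, List.not_mem_nil, false_implies, implies_true, iff_true]
      intro w _
      simp [LForm.truth]
  | cons h t =>
      rw [bigIConj, assert_foldl_iconj]
      simp only [List.mem_cons]
      constructor
      · rintro ⟨h1, h2⟩ θ (rfl | hθ)
        · exact h1
        · exact h2 θ hθ
      · intro h1
        exact ⟨h1 h (Or.inl rfl), fun θ hθ => h1 θ (Or.inr hθ)⟩

/-- Persistence for formulas without intensional implication. -/
lemma persist_noImp (h : φ.hasImp = false) (hD : D ⊆ C) :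
    (Assert C φ → Assert D φ) ∧ (Deny C φ → Deny D φ) := by
  induction φ with
  | base α => exact ⟨fun ha w hw => ha w (hD hw), fun ha w hw => ha w (hD hw)⟩
  | iimp φ ψ ih1 ih2 => simp [SForm.hasImp] at h
  | iconj φ ψ ih1 ih2 =>
      simp only [SForm.hasImp, Bool.or_eq_false_iff] at h
      exact ⟨fun ha => ⟨(ih1 h.1).1 ha.1, (ih2 h.2).1 ha.2⟩,
        fun ha => ha.elim (fun x => Or.inl ((ih1 h.1).2 x)) (fun x => Or.inr ((ih2 h.2).2 x))⟩
  | idisj φ ψ ih1 ih2 =>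
      simp only [SForm.hasImp, Bool.or_eq_false_iff] at h
      exact ⟨fun ha => ha.elim (fun x => Or.inl ((ih1 h.1).1 x)) (fun x => Or.inr ((ih2 h.2).1 x)),
        fun ha => ⟨(ih1 h.1).2 ha.1, (ih2 h.2).2 ha.2⟩⟩
  | ineg φ ih =>
      simp only [SForm.hasImp] at h
      exact ⟨(ih h).2, (ih h).1⟩

lemma persist_nn (h : φ.noImpUnderNeg = true) (hD : D ⊆ C) (ha : Assert C φ) : Assert D φ := by
  induction φ generalizing C D with
  | base α => exact fun w hw => ha w (hD hw)
  | iimp φ ψ ih1 ih2 => exact fun E hE1 hE2 => ha E hE1 (hE2.trans hD)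
  | iconj φ ψ ih1 ih2 =>
      simp only [SForm.noImpUnderNeg, Bool.and_eq_true] at h
      exact ⟨ih1 h.1 hD ha.1, ih2 h.2 hD ha.2⟩
  | idisj φ ψ ih1 ih2 =>
      simp only [SForm.noImpUnderNeg, Bool.and_eq_true] at h
      exact ha.elim (fun x => Or.inl (ih1 h.1 hD x)) (fun x => Or.inr (ih2 h.2 hD x))
  | ineg φ ih =>
      simp only [SForm.noImpUnderNeg, Bool.not_eq_true'] at h
      exact (persist_noImp h hD).2 ha

lemma persist_safe (h : Safe φ) (hD : D ⊆ C) (ha : Assert C φ) : Assert D φ := by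
  rcases h with h | ⟨ψ, χ, rfl⟩
  · exact persist_nn h hD ha
  · exact fun E hE1 hE2 => ha E hE1 (hE2.trans hD)

lemma not_assert_deny (hC : C.Nonempty) (ha : Assert C φ) (hd : Deny C φ) : False := by
  induction φ generalizing C with
  | base α =>
      obtain ⟨w, hw⟩ := hC
      have h1 := ha w hw; have h2 := hd w hw
      rw [h1] at h2; exact Bool.noConfusion h2
  | iimp φ ψ ih1 ih2 =>
      obtain ⟨D, hD1, hD2, hD3, hD4⟩ := hd
      exact ih2 hD1 (ha D hD1 hD2 hD3) hD4
  | iconj φ ψ ih1 ih2 => exact hd.elim (fun x => ih1 hC ha.1 x) (fun x => ih2 hC ha.2 x)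
  | idisj φ ψ ih1 ih2 => exact ha.elim (fun x => ih1 hC x hd.1) (fun x => ih2 hC x hd.2)
  | ineg φ ih => exact ih hC hd ha

/-- Soundness. -/
theorem Deriv.sound (h : Deriv p Δ φ) : Entails Δ φ := by
  induction h with
  | hyp h => exact fun C hC hΔ => hΔ _ h
  | @iEConj Δ α β _ _ ih1 ih2 =>
      intro C hC hΔ w hw
      simp [LForm.truth, ih1 C hC hΔ w hw, ih2 C hC hΔ w hw]
  | @eEConj₁ Δ α β _ ih =>
      intro C hC hΔ w hw
      have := ih C hC hΔ w hw
      simp [LForm.truth] at this; exact this.1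
  | @eEConj₂ Δ α β _ ih =>
      intro C hC hΔ w hw
      have := ih C hC hΔ w hw
      simp [LForm.truth] at this; exact this.2
  | @iEDisj₁ Δ α β _ ih =>
      intro C hC hΔ w hw
      simp [LForm.truth, ih C hC hΔ w hw]
  | @iEDisj₂ Δ α β _ ih =>
      intro C hC hΔ w hw
      simp [LForm.truth, ih C hC hΔ w hw]
  | @eEDisj Δ α β γ _ _ _ ih ih1 ih2 =>
      intro C hC hΔ w hw
      have hsing : ∀ δ ∈ safePart Δ, Assert {w} δ :=
        fun δ hδ => persist_safe hδ.2 (Set.singleton_subset_iff.2 hw) (hΔ δ hδ.1)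
      have hd := ih C hC hΔ w hw
      simp only [LForm.truth, Bool.or_eq_true] at hd
      rcases hd with hd | hd
      · refine ih1 {w} ⟨w, rfl⟩ ?_ w rfl
        intro δ hδ
        rcases hδ with rfl | hδ
        · exact fun w' hw' => by rwa [Set.mem_singleton_iff.1 hw']
        · exact hsing δ hδ
      · refine ih2 {w} ⟨w, rfl⟩ ?_ w rfl
        intro δ hδ
        rcases hδ with rfl | hδ
        · exact fun w' hw' => by rwa [Set.mem_singleton_iff.1 hw']
        · exact hsing δ hδ
  | @iEImp Δ α β _ ih =>
      intro C hC hΔ w hw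
      have hsing : ∀ δ ∈ safePart Δ, Assert {w} δ :=
        fun δ hδ => persist_safe hδ.2 (Set.singleton_subset_iff.2 hw) (hΔ δ hδ.1)
      simp only [LForm.truth, Bool.or_eq_true, Bool.not_eq_true']
      rcases hα : α.truth w with _ | _
      · exact Or.inl rfl
      · refine Or.inr (ih {w} ⟨w, rfl⟩ ?_ w rfl)
        intro δ hδ
        rcases hδ with rfl | hδ
        · exact fun w' hw' => by rwa [Set.mem_singleton_iff.1 hw']
        · exact hsing δ hδ
  | @eEImp Δ α β _ _ ih1 ih2 =>
      intro C hC hΔ w hw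
      have h1 := ih1 C hC hΔ w hw
      have h2 := ih2 C hC hΔ w hw
      simp only [LForm.truth, Bool.or_eq_true, Bool.not_eq_true'] at h2
      rcases h2 with h2 | h2
      · rw [h1] at h2; exact Bool.noConfusion h2
      · exact h2
  | @iENeg Δ α _ ih =>
      intro C hC hΔ w hw
      have hsing : ∀ δ ∈ safePart Δ, Assert {w} δ :=
        fun δ hδ => persist_safe hδ.2 (Set.singleton_subset_iff.2 hw) (hΔ δ hδ.1)
      simp only [LForm.truth, Bool.not_eq_true']
      rcases hα : α.truth w with _ | _
      · rfl
      · exfalso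
        refine assert_botF (p := p) (⟨w, rfl⟩ : Set.Nonempty {w}) (ih {w} ⟨w, rfl⟩ ?_)
        intro δ hδ
        rcases hδ with rfl | hδ
        · exact fun w' hw' => by rwa [Set.mem_singleton_iff.1 hw']
        · exact hsing δ hδ
  | @eENeg₁ Δ α _ _ ih1 ih2 =>
      intro C hC hΔ
      exfalso
      obtain ⟨w, hw⟩ := hC
      have h1 := ih1 C ⟨w, hw⟩ hΔ w hw
      have h2 := ih2 C ⟨w, hw⟩ hΔ w hw
      simp only [LForm.truth, Bool.not_eq_true'] at h2
      rw [h1] at h2; exact Bool.noConfusion h2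
  | @eENeg₂ Δ α _ ih =>
      intro C hC hΔ w hw
      have := ih C hC hΔ w hw
      simpa [LForm.truth] using this
  | iIConj _ _ ih1 ih2 => exact fun C hC hΔ => ⟨ih1 C hC hΔ, ih2 C hC hΔ⟩
  | eIConj₁ _ ih => exact fun C hC hΔ => (ih C hC hΔ).1
  | eIConj₂ _ ih => exact fun C hC hΔ => (ih C hC hΔ).2
  | iIDisj₁ _ ih => exact fun C hC hΔ => Or.inl (ih C hC hΔ)
  | iIDisj₂ _ ih => exact fun C hC hΔ => Or.inr (ih C hC hΔ)
  | eIDisj _ _ _ ih ih1 ih2 =>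
      intro C hC hΔ
      rcases ih C hC hΔ with h | h
      · refine ih1 C hC ?_
        rintro δ (rfl | hδ)
        · exact h
        · exact hΔ δ hδ
      · refine ih2 C hC ?_
        rintro δ (rfl | hδ)
        · exact h
        · exact hΔ δ hδ
  | @iIImp Δ φ ψ _ ih =>
      intro C hC hΔ D hD1 hD2 hD3
      refine ih D hD1 ?_
      rintro δ (rfl | hδ)
      · exact hD3
      · exact persist_safe hδ.2 hD2 (hΔ δ hδ.1)
  | eIImp _ _ ih1 ih2 =>
      exact fun C hC hΔ => ih2 C hC hΔ C hC (le_refl C) (ih1 C hC hΔ)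
  | @iINeg Δ α _ ih =>
      intro C hC hΔ w hw
      have hsing : ∀ δ ∈ safePart Δ, Assert {w} δ :=
        fun δ hδ => persist_safe hδ.2 (Set.singleton_subset_iff.2 hw) (hΔ δ hδ.1)
      rcases hα : α.truth w with _ | _
      · rfl
      · exfalso
        refine assert_botF (p := p) (⟨w, rfl⟩ : Set.Nonempty {w}) (ih {w} ⟨w, rfl⟩ ?_)
        intro δ hδ
        rcases hδ with rfl | hδ
        · exact fun w' hw' => by rwa [Set.mem_singleton_iff.1 hw']
        · exact hsing δ hδ
  | eINeg _ _ ih1 ih2 =>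
      intro C hC hΔ
      exact absurd (ih1 C hC hΔ) (fun x => not_assert_deny hC x (ih2 C hC hΔ))
  | efq _ ih =>
      intro C hC hΔ
      exact absurd (ih C hC hΔ) (fun x => assert_botF hC x)
  | negNeg₁ _ ih => exact fun C hC hΔ => ih C hC hΔ
  | negNeg₂ _ ih => exact fun C hC hΔ => ih C hC hΔ
  | negConj₁ _ ih => exact fun C hC hΔ => ih C hC hΔ
  | negConj₂ _ ih => exact fun C hC hΔ => ih C hC hΔ
  | negDisj₁ _ ih => exact fun C hC hΔ => ih C hC hΔ
  | negDisj₂ _ ih => exact fun C hC hΔ => ih C hC hΔ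
  | @negImp₁ Δ φ ψ _ ih =>
      intro C hC hΔ
      obtain ⟨D, hD1, hD2, hD3, hD4⟩ := ih C hC hΔ
      exact ⟨D, hD1, hD2, ⟨hD3, hD4⟩, deny_botF⟩
  | @negImp₂ Δ φ ψ _ ih =>
      intro C hC hΔ
      obtain ⟨D, hD1, hD2, hD3, _⟩ := ih C hC hΔ
      exact ⟨D, hD1, hD2, hD3.1, hD3.2⟩
  | @cem Δ φ =>
      intro C hC hΔ
      by_cases h : ∃ D : Context A, D.Nonempty ∧ D ⊆ C ∧ Assert D φ
      · obtain ⟨D, h1, h2, h3⟩ := h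
        exact Or.inr ⟨D, h1, h2, h3, deny_botF⟩
      · refine Or.inl (fun D hD1 hD2 hD3 => absurd ⟨D, hD1, hD2, hD3⟩ h)
  | @diaOplus Δ l hne _ ih =>
      intro C hC hΔ
      have hall : ∀ α ∈ l, Assert C (dia p (.base α)) := by
        have := (assert_bigIConj).1 (ih C hC hΔ)
        intro α hα
        exact this _ (List.mem_map_of_mem hα)
      have hch : ∀ α ∈ l, ∃ D' : Context A, D'.Nonempty ∧ D' ⊆ C ∧ Assert D' (.base α) :=
        fun α hα => assert_dia.1 (hall α hα)
      set D : Context A := {w ∈ C | ∃ α ∈ l, α.truth w = true} with hD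
      have hDC : D ⊆ C := fun w hw => hw.1
      have hsub : ∀ α ∈ l, ∀ D' : Context A, D' ⊆ C → Assert D' (.base α) → D' ⊆ D :=
        fun α hα D' h1 h2 w hw => ⟨h1 hw, α, hα, h2 w hw⟩
      have hDne : D.Nonempty := by
        obtain ⟨α, hα⟩ := List.exists_mem_of_ne_nil l hne
        obtain ⟨D', h1, h2, h3⟩ := hch α hα
        obtain ⟨w, hw⟩ := h1
        exact ⟨w, hsub α hα D' h2 h3 hw⟩
      refine assert_dia.2 ⟨D, hDne, hDC, ?_, ?_⟩
      · intro w hw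
        obtain ⟨_, α, hα, hα2⟩ := hw
        exact truth_bigEDisj.2 ⟨α, hα, hα2⟩
      · refine assert_bigIConj.2 ?_
        intro θ hθ
        obtain ⟨α, hα, rfl⟩ := List.mem_map.1 hθ
        obtain ⟨D', h1, h2, h3⟩ := hch α hα
        exact assert_dia.2 ⟨D', h1, hsub α hα D' h2 h3, h3⟩

end Sem

/- ============ Stage 3: syntactic fold lemmas ============ -/

section Syn
variable {p : A} {Δ Δ' : Set (SForm A)} {φ ψ χ θ : SForm A} {α β γ : LForm A}

lemma safePart_insert_safePart : safePart Δ ⊆ safePart (insert φ (safePart Δ)) :=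
  fun x hx => ⟨Set.mem_insert_of_mem _ hx, hx.2⟩

lemma deriv_foldl_econj_intro {t : List (LForm A)} {acc : LForm A}
    (h : Deriv p Δ (.base acc)) (ht : ∀ α ∈ t, Deriv p Δ (.base α)) :
    Deriv p Δ (.base (t.foldl .econj acc)) := by
  induction t generalizing acc with
  | nil => exact h
  | cons a t ih => exact ih (.iEConj h (ht a (.head _))) (fun α hα => ht α (.tail _ hα))

lemma deriv_bigEConj_intro {L : List (LForm A)} (h : ∀ α ∈ L, Deriv p Δ (.base α)) :
    Deriv p Δ (.base (bigEConj p L)) := by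
  cases L with
  | nil => exact .iEImp (.hyp (Set.mem_insert _ _))
  | cons a t => exact deriv_foldl_econj_intro (h a (.head _)) (fun α hα => h α (.tail _ hα))

lemma deriv_foldl_econj_elim {t : List (LForm A)} {acc : LForm A}
    (h : Deriv p Δ (.base (t.foldl .econj acc))) :
    Deriv p Δ (.base acc) ∧ ∀ α ∈ t, Deriv p Δ (.base α) := by
  induction t generalizing acc with
  | nil => exact ⟨h, by simp⟩
  | cons a t ih =>
      obtain ⟨h1, h2⟩ := ih (acc := .econj acc a) h
      refine ⟨.eEConj₁ h1, ?_⟩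
      intro α hα
      rcases List.mem_cons.1 hα with rfl | hα
      · exact .eEConj₂ h1
      · exact h2 α hα

lemma deriv_bigEConj_elim {L : List (LForm A)} (h : Deriv p Δ (.base (bigEConj p L))) :
    ∀ α ∈ L, Deriv p Δ (.base α) := by
  cases L with
  | nil => simp
  | cons a t =>
      intro α hα
      obtain ⟨h1, h2⟩ := deriv_foldl_econj_elim (h : Deriv p Δ (.base (t.foldl .econj a)))
      rcases List.mem_cons.1 hα with rfl | hα
      · exact h1
      · exact h2 α hα

lemma deriv_foldl_edisj_intro {t : List (LForm A)} {acc : LForm A}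
    (h : Deriv p Δ (.base acc) ∨ ∃ α ∈ t, Deriv p Δ (.base α)) :
    Deriv p Δ (.base (t.foldl .edisj acc)) := by
  induction t generalizing acc with
  | nil => exact h.elim id (by simp)
  | cons a t ih =>
      rcases h with h | ⟨α, hα, hd⟩
      · exact ih (Or.inl (.iEDisj₁ h))
      · rcases List.mem_cons.1 hα with rfl | hα
        · exact ih (Or.inl (.iEDisj₂ hd))
        · exact ih (Or.inr ⟨α, hα, hd⟩)

lemma deriv_bigEDisj_intro {L : List (LForm A)} (hα : α ∈ L) (h : Deriv p Δ (.base α)) :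
    Deriv p Δ (.base (bigEDisj p L)) := by
  cases L with
  | nil => simp at hα
  | cons a t =>
      rcases List.mem_cons.1 hα with rfl | hα
      · exact deriv_foldl_edisj_intro (Or.inl h)
      · exact deriv_foldl_edisj_intro (Or.inr ⟨α, hα, h⟩)

lemma deriv_foldl_edisj_elim {t : List (LForm A)} {acc : LForm A}
    (h : Deriv p Δ (.base (t.foldl .edisj acc)))
    (hacc : Deriv p (insert (.base acc) (safePart Δ)) (.base γ))
    (ht : ∀ α ∈ t, Deriv p (insert (.base α) (safePart Δ)) (.base γ)) :
    Deriv p Δ (.base γ) := by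
  induction t generalizing acc with
  | nil => exact h.cut (hacc.mono (Set.insert_subset_insert safePart_subset))
  | cons a t ih =>
      refine ih (acc := .edisj acc a) h ?_ (fun α hα => ht α (.tail _ hα))
      refine Deriv.eEDisj (.hyp (Set.mem_insert _ _)) ?_ ?_
      · exact hacc.mono (Set.insert_subset_insert safePart_insert_safePart)
      · exact (ht a (.head _)).mono (Set.insert_subset_insert safePart_insert_safePart)

lemma deriv_bigEDisj_elim {L : List (LForm A)}
    (h : Deriv p Δ (.base (bigEDisj p L)))
    (hL : ∀ α ∈ L, Deriv p (insert (.base α) (safePart Δ)) (.base γ)) :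
    Deriv p Δ (.base γ) := by
  cases L with
  | nil => exact .efq h
  | cons a t => exact deriv_foldl_edisj_elim h (hL a (.head _)) (fun α hα => hL α (.tail _ hα))

lemma deriv_foldl_iconj_intro {t : List (SForm A)} {acc : SForm A}
    (h : Deriv p Δ acc) (ht : ∀ θ ∈ t, Deriv p Δ θ) :
    Deriv p Δ (t.foldl .iconj acc) := by
  induction t generalizing acc with
  | nil => exact h
  | cons a t ih => exact ih (.iIConj h (ht a (.head _))) (fun θ hθ => ht θ (.tail _ hθ))

lemma deriv_bigIConj_intro {L : List (SForm A)} (h : ∀ θ ∈ L, Deriv p Δ θ) :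
    Deriv p Δ (bigIConj p L) := by
  cases L with
  | nil => exact .iEImp (.hyp (Set.mem_insert _ _))
  | cons a t => exact deriv_foldl_iconj_intro (h a (.head _)) (fun θ hθ => h θ (.tail _ hθ))

lemma deriv_foldl_iconj_elim {t : List (SForm A)} {acc : SForm A}
    (h : Deriv p Δ (t.foldl .iconj acc)) :
    Deriv p Δ acc ∧ ∀ θ ∈ t, Deriv p Δ θ := by
  induction t generalizing acc with
  | nil => exact ⟨h, by simp⟩
  | cons a t ih =>
      obtain ⟨h1, h2⟩ := ih (acc := .iconj acc a) h
      refine ⟨.eIConj₁ h1, ?_⟩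
      intro θ hθ
      rcases List.mem_cons.1 hθ with rfl | hθ
      · exact .eIConj₂ h1
      · exact h2 θ hθ

lemma deriv_bigIConj_elim {L : List (SForm A)} (h : Deriv p Δ (bigIConj p L)) :
    ∀ θ ∈ L, Deriv p Δ θ := by
  cases L with
  | nil => simp
  | cons a t =>
      intro θ hθ
      obtain ⟨h1, h2⟩ := deriv_foldl_iconj_elim (h : Deriv p Δ (t.foldl .iconj a))
      rcases List.mem_cons.1 hθ with rfl | hθ
      · exact h1
      · exact h2 θ hθ

lemma deriv_foldl_idisj_intro {t : List (SForm A)} {acc : SForm A}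
    (h : Deriv p Δ acc ∨ ∃ θ ∈ t, Deriv p Δ θ) :
    Deriv p Δ (t.foldl .idisj acc) := by
  induction t generalizing acc with
  | nil => exact h.elim id (by simp)
  | cons a t ih =>
      rcases h with h | ⟨θ, hθ, hd⟩
      · exact ih (Or.inl (.iIDisj₁ h))
      · rcases List.mem_cons.1 hθ with rfl | hθ
        · exact ih (Or.inl (.iIDisj₂ hd))
        · exact ih (Or.inr ⟨θ, hθ, hd⟩)

lemma deriv_bigIDisj_intro {L : List (SForm A)} (hθ : θ ∈ L) (h : Deriv p Δ θ) :
    Deriv p Δ (bigIDisj p L) := by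
  cases L with
  | nil => simp at hθ
  | cons a t =>
      rcases List.mem_cons.1 hθ with rfl | hθ
      · exact deriv_foldl_idisj_intro (Or.inl h)
      · exact deriv_foldl_idisj_intro (Or.inr ⟨θ, hθ, h⟩)

lemma deriv_foldl_idisj_elim {t : List (SForm A)} {acc : SForm A}
    (h : Deriv p Δ (t.foldl .idisj acc))
    (hacc : Deriv p (insert acc Δ) χ)
    (ht : ∀ θ ∈ t, Deriv p (insert θ Δ) χ) :
    Deriv p Δ χ := by
  induction t generalizing acc with
  | nil => exact h.cut hacc
  | cons a t ih =>
      refine ih (acc := .idisj acc a) h ?_ (fun θ hθ => ht θ (.tail _ hθ))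
      refine Deriv.eIDisj (.hyp (Set.mem_insert _ _)) ?_ ?_
      · exact hacc.mono (Set.insert_subset_insert (Set.subset_insert _ _))
      · exact (ht a (.head _)).mono (Set.insert_subset_insert (Set.subset_insert _ _))

lemma deriv_bigIDisj_elim {L : List (SForm A)}
    (h : Deriv p Δ (bigIDisj p L))
    (hL : ∀ θ ∈ L, Deriv p (insert θ Δ) χ) :
    Deriv p Δ χ := by
  cases L with
  | nil => exact .efq h
  | cons a t => exact deriv_foldl_idisj_elim h (hL a (.head _)) (fun θ hθ => hL θ (.tail _ hθ))

/-- Law of excluded middle for atoms, extensionally. -/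
lemma deriv_lem_atom (a : A) : Deriv p Δ (.base (.edisj (.atom a) (.eneg (.atom a)))) := by
  set δ : LForm A := .edisj (.atom a) (.eneg (.atom a)) with hδ
  refine Deriv.eENeg₂ (.iENeg ?_)
  set Δ₂ : Set (SForm A) := insert (.base (.eneg δ)) (safePart Δ) with hΔ₂
  have hne : Deriv p Δ₂ (.base (.eneg δ)) := .hyp (Set.mem_insert _ _)
  have hnota : Deriv p Δ₂ (.base (.eneg (.atom a))) := by
    refine Deriv.iENeg ?_
    refine Deriv.eENeg₁ (α := δ) (.iEDisj₁ (.hyp (Set.mem_insert _ _))) ?_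
    exact .hyp (Set.mem_insert_of_mem _
      (mem_safePart (Set.mem_insert _ _) (safe_base _)))
  exact .eENeg₁ (.iEDisj₂ hnota) hne

/-- ⊢ ¬⊥. -/
lemma deriv_neg_botF : Deriv p Δ (.ineg (botF p)) := by
  refine Deriv.iINeg ?_
  exact .hyp (Set.mem_insert _ _)

/-- ◇ is monotone under derivable implication. -/
lemma deriv_diaMono (h : Deriv p {θ} χ) (hd : Deriv p Δ (dia p θ)) :
    Deriv p Δ (dia p χ) := by
  have hcem : Deriv p Δ (.idisj (.iimp χ (botF p)) (dia p χ)) := .cem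
  refine hcem.eIDisj ?_ (.hyp (Set.mem_insert _ _))
  -- Δ₁ = insert (χ→⊥) Δ
  set Δ₁ : Set (SForm A) := insert (.iimp χ (botF p)) Δ with hΔ₁
  refine Deriv.efq ?_
  have himp : Deriv p Δ₁ (.iimp θ (botF p)) := by
    refine Deriv.iIImp ?_
    have hχ : Deriv p (insert θ (safePart Δ₁)) χ :=
      h.mono (by intro x hx; rcases hx with rfl; exact Set.mem_insert _ _)
    refine Deriv.eIImp hχ (.hyp (Set.mem_insert_of_mem _ ?_))
    exact mem_safePart (Set.mem_insert _ _) (safe_iimp _ _)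
  exact Deriv.eINeg himp (hd.mono (Set.subset_insert _ _))

end Syn

/- ============ Stage 4: canonical formulas and X/Y sets ============ -/

section Canon
variable [DecidableEq A] (p : A) (S : Finset A)
set_option linter.unusedSectionVars false

/-- The literal for atom `a` according to restricted world `u`. -/
def litF (u : ↥S → Bool) (a : ↥S) : LForm A := if u a then .atom a.1 else .eneg (.atom a.1)

/-- The canonical description of a restricted world. -/
noncomputable def sigF (u : ↥S → Bool) : LForm A :=
  bigEConj p ((Finset.univ : Finset ↥S).toList.map (litF S u))

/-- Extension of a restricted world to a full world (false outside `S`). -/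
def erW (u : ↥S → Bool) : World A := fun a => if h : a ∈ S then u ⟨a, h⟩ else false

/-- Characteristic formula of a finite set of restricted worlds. -/
noncomputable def muC (C : Finset (↥S → Bool)) : SForm A := oplus p (C.toList.map (sigF p S))

/-- Characteristic formula of a finite set of finite sets of restricted worlds. -/
noncomputable def xiX (X : Finset (Finset (↥S → Bool))) : SForm A :=
  bigIDisj p (X.toList.map (muC p S))

/-- The canonical context associated to a finite set of restricted worlds. -/
def ectx (C : Finset (↥S → Bool)) : Context A := erW S '' ↑C

open Classical in
/-- The canonical contexts asserting φ. -/
noncomputable def Xs (φ : SForm A) : Finset (Finset (↥S → Bool)) :=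
  Finset.univ.filter (fun C => C.Nonempty ∧ Assert (ectx S C) φ)

open Classical in
/-- The canonical contexts denying φ. -/
noncomputable def Ys (φ : SForm A) : Finset (Finset (↥S → Bool)) :=
  Finset.univ.filter (fun C => C.Nonempty ∧ Deny (ectx S C) φ)

variable {p S}

lemma erW_app (u : ↥S → Bool) (a : ↥S) : erW S u a.1 = u a := by
  simp [erW]

lemma erW_injective : Function.Injective (erW S) := by
  intro u v h
  funext a
  have := congrFun h a.1
  rwa [erW_app, erW_app] at this

lemma truth_litF {u : ↥S → Bool} {a : ↥S} {w : World A} :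
    (litF S u a).truth w = true ↔ w a.1 = u a := by
  rcases h : u a with _ | _ <;> simp [litF, h, LForm.truth]

lemma truth_sigF {u : ↥S → Bool} {w : World A} :
    (sigF p S u).truth w = true ↔ ∀ a : ↥S, w a.1 = u a := by
  rw [sigF, truth_bigEConj]
  constructor
  · intro h a
    exact truth_litF.1 (h _ (List.mem_map_of_mem (Finset.mem_toList.2 (Finset.mem_univ a))))
  · intro h β hβ
    obtain ⟨a, _, rfl⟩ := List.mem_map.1 hβ
    exact truth_litF.2 (h a)

lemma truth_sigF_er {u v : ↥S → Bool} :
    (sigF p S u).truth (erW S v) = true ↔ v = u := by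
  rw [truth_sigF]
  constructor
  · intro h
    funext a
    have := h a
    rwa [erW_app] at this
  · rintro rfl a
    exact erW_app v a

lemma ectx_nonempty {C : Finset (↥S → Bool)} : (ectx S C).Nonempty ↔ C.Nonempty := by
  constructor
  · rintro ⟨w, u, hu, rfl⟩
    exact ⟨u, hu⟩
  · rintro ⟨u, hu⟩
    exact ⟨erW S u, u, hu, rfl⟩

lemma ectx_mono {C D : Finset (↥S → Bool)} (h : D ⊆ C) : ectx S D ⊆ ectx S C := by
  rintro w ⟨u, hu, rfl⟩
  exact ⟨u, h hu, rfl⟩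

lemma sub_ectx {C : Finset (↥S → Bool)} {D : Context A} (h : D ⊆ ectx S C) :
    ∃ D' : Finset (↥S → Bool), D' ⊆ C ∧ D = ectx S D' ∧ (D.Nonempty ↔ D'.Nonempty) := by
  classical
  refine ⟨C.filter (fun u => erW S u ∈ D), fun u hu => (Finset.mem_filter.1 hu).1, ?_, ?_⟩
  · apply Set.eq_of_subset_of_subset
    · intro w hw
      obtain ⟨u, hu, rfl⟩ := h hw
      exact ⟨u, Finset.mem_filter.2 ⟨hu, hw⟩, rfl⟩
    · rintro w ⟨u, hu, rfl⟩
      exact (Finset.mem_filter.1 hu).2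
  · constructor
    · rintro ⟨w, hw⟩
      obtain ⟨u, hu, rfl⟩ := h hw
      exact ⟨u, Finset.mem_filter.2 ⟨hu, hw⟩⟩
    · rintro ⟨u, hu⟩
      exact ⟨erW S u, (Finset.mem_filter.1 hu).2⟩

lemma mem_Xs {φ : SForm A} {C : Finset (↥S → Bool)} :
    C ∈ Xs S φ ↔ C.Nonempty ∧ Assert (ectx S C) φ := by
  classical
  simp [Xs]

lemma mem_Ys {φ : SForm A} {C : Finset (↥S → Bool)} :
    C ∈ Ys S φ ↔ C.Nonempty ∧ Deny (ectx S C) φ := by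
  classical
  simp [Ys]

lemma mem_Xs_base {α : LForm A} {C : Finset (↥S → Bool)} :
    C ∈ Xs S (.base α) ↔ C.Nonempty ∧ ∀ u ∈ C, α.truth (erW S u) = true := by
  rw [mem_Xs]
  refine and_congr_right fun _ => ?_
  rw [assert_base]
  constructor
  · intro h u hu
    exact h _ ⟨u, hu, rfl⟩
  · rintro h w ⟨u, hu, rfl⟩
    exact h u hu

lemma Ys_base {α : LForm A} : Ys S (.base α) = Xs S (.base (.eneg α)) := by
  ext C
  rw [mem_Ys, mem_Xs_base]
  refine and_congr_right fun _ => ?_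
  rw [deny_base]
  constructor
  · intro h u hu
    have := h _ ⟨u, hu, rfl⟩
    simp [LForm.truth, this]
  · rintro h w ⟨u, hu, rfl⟩
    have := h u hu
    simp only [LForm.truth, Bool.not_eq_true'] at this
    exact this

lemma Xs_iconj {φ ψ : SForm A} : Xs S (.iconj φ ψ) = Xs S φ ∩ Xs S ψ := by
  ext C
  rw [Finset.mem_inter, mem_Xs, mem_Xs, mem_Xs, assert_iconj]
  tauto

lemma Xs_idisj {φ ψ : SForm A} : Xs S (.idisj φ ψ) = Xs S φ ∪ Xs S ψ := by
  ext C
  rw [Finset.mem_union, mem_Xs, mem_Xs, mem_Xs, assert_idisj]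
  tauto

lemma Ys_iconj {φ ψ : SForm A} : Ys S (.iconj φ ψ) = Ys S φ ∪ Ys S ψ := by
  ext C
  rw [Finset.mem_union, mem_Ys, mem_Ys, mem_Ys, deny_iconj]
  tauto

lemma Ys_idisj {φ ψ : SForm A} : Ys S (.idisj φ ψ) = Ys S φ ∩ Ys S ψ := by
  ext C
  rw [Finset.mem_inter, mem_Ys, mem_Ys, mem_Ys, deny_idisj]
  tauto

lemma Xs_ineg {φ : SForm A} : Xs S (.ineg φ) = Ys S φ := by
  ext C
  rw [mem_Xs, mem_Ys, assert_ineg]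

lemma Ys_ineg {φ : SForm A} : Ys S (.ineg φ) = Xs S φ := by
  ext C
  rw [mem_Ys, mem_Xs, deny_ineg]

lemma mem_Xs_iimp {φ ψ : SForm A} {C : Finset (↥S → Bool)} :
    C ∈ Xs S (.iimp φ ψ) ↔
      C.Nonempty ∧ ∀ D ⊆ C, D.Nonempty → D ∈ Xs S φ → D ∈ Xs S ψ := by
  rw [mem_Xs, assert_iimp]
  refine and_congr_right fun _ => ?_
  constructor
  · intro h D hDC hDne hDφ
    rw [mem_Xs] at hDφ ⊢
    exact ⟨hDne, h (ectx S D) (ectx_nonempty.2 hDne) (ectx_mono hDC) hDφ.2⟩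
  · intro h D hDne hDC hDφ
    obtain ⟨D', hD'C, rfl, hiff⟩ := sub_ectx hDC
    have hD'ne : D'.Nonempty := hiff.1 hDne
    exact (mem_Xs.1 (h D' hD'C hD'ne (mem_Xs.2 ⟨hD'ne, hDφ⟩))).2

lemma mem_Ys_iimp {φ ψ : SForm A} {C : Finset (↥S → Bool)} :
    C ∈ Ys S (.iimp φ ψ) ↔
      C.Nonempty ∧ ∃ D ⊆ C, D.Nonempty ∧ D ∈ Xs S φ ∧ D ∈ Ys S ψ := by
  rw [mem_Ys, deny_iimp]
  refine and_congr_right fun _ => ?_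
  constructor
  · rintro ⟨D, hDne, hDC, hφ, hψ⟩
    obtain ⟨D', hD'C, rfl, hiff⟩ := sub_ectx hDC
    have hD'ne := hiff.1 hDne
    exact ⟨D', hD'C, hD'ne, mem_Xs.2 ⟨hD'ne, hφ⟩, mem_Ys.2 ⟨hD'ne, hψ⟩⟩
  · rintro ⟨D, hDC, hDne, hφ, hψ⟩
    exact ⟨ectx S D, ectx_nonempty.2 hDne, ectx_mono hDC, (mem_Xs.1 hφ).2, (mem_Ys.1 hψ).2⟩

lemma deny_botF_ctx {C : Context A} : Deny C (botF p) := deny_botF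

lemma mem_Xs_dia {χ : SForm A} {C : Finset (↥S → Bool)} :
    C ∈ Xs S (dia p χ) ↔ C.Nonempty ∧ ∃ D ⊆ C, D.Nonempty ∧ D ∈ Xs S χ := by
  rw [dia, mem_Xs, assert_ineg, deny_iimp]
  refine and_congr_right fun _ => ?_
  constructor
  · rintro ⟨D, hDne, hDC, hφ, _⟩
    obtain ⟨D', hD'C, rfl, hiff⟩ := sub_ectx hDC
    have hD'ne := hiff.1 hDne
    exact ⟨D', hD'C, hD'ne, mem_Xs.2 ⟨hD'ne, hφ⟩⟩
  · rintro ⟨D, hDC, hDne, hφ⟩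
    exact ⟨ectx S D, ectx_nonempty.2 hDne, ectx_mono hDC, (mem_Xs.1 hφ).2, deny_botF⟩

lemma Ys_iimp_eq_Xs_dia {φ ψ : SForm A} :
    Ys S (.iimp φ ψ) = Xs S (dia p (.iconj φ (.ineg ψ))) := by
  ext C
  rw [mem_Ys_iimp, mem_Xs_dia]
  refine and_congr_right fun _ => ?_
  constructor
  · rintro ⟨D, hDC, hDne, h1, h2⟩
    refine ⟨D, hDC, hDne, ?_⟩
    rw [Xs_iconj, Finset.mem_inter, Xs_ineg]
    exact ⟨h1, h2⟩
  · rintro ⟨D, hDC, hDne, h⟩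
    rw [Xs_iconj, Finset.mem_inter, Xs_ineg] at h
    exact ⟨D, hDC, hDne, h.1, h.2⟩

lemma Xs_botF : Xs S (botF p) = ∅ := by
  ext C
  simp only [Finset.notMem_empty, iff_false, mem_Xs, not_and]
  intro hC h
  exact assert_botF (ectx_nonempty.2 hC) h

end Canon

/- ============ Stage 5: extensional engine ============ -/

/-- The list of atoms of an L-formula. -/
def latoms : LForm A → List A
  | .atom a => [a]
  | .eimp α β => latoms α ++ latoms β
  | .econj α β => latoms α ++ latoms β
  | .edisj α β => latoms α ++ latoms β
  | .eneg α => latoms α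

/-- The list of atoms of an L*-formula. -/
def satoms : SForm A → List A
  | .base α => latoms α
  | .iimp φ ψ => satoms φ ++ satoms ψ
  | .iconj φ ψ => satoms φ ++ satoms ψ
  | .idisj φ ψ => satoms φ ++ satoms ψ
  | .ineg φ => satoms φ

section Engine
variable [DecidableEq A] {p : A} {S : Finset A} {Δ : Set (SForm A)}
set_option linter.unusedSectionVars false

lemma deriv_litF {u : ↥S → Bool} (h : SForm.base (sigF p S u) ∈ Δ) (a : ↥S) :
    Deriv p Δ (.base (litF S u a)) :=
  deriv_bigEConj_elim (.hyp h) _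
    (List.mem_map_of_mem (Finset.mem_toList.2 (Finset.mem_univ a)))

lemma sigF_clash {u v : ↥S → Bool} (huv : u ≠ v)
    (hu : SForm.base (sigF p S u) ∈ Δ) (hv : SForm.base (sigF p S v) ∈ Δ) :
    Deriv p Δ (botF p) := by
  have hex : ∃ a, u a ≠ v a := by
    by_contra hc
    push_neg at hc
    exact huv (funext hc)
  obtain ⟨a, ha⟩ := hex
  have h1 := deriv_litF hu a
  have h2 := deriv_litF hv a
  rcases hua : u a with _ | _ <;> rcases hva : v a with _ | _
  · exact absurd (hua.trans hva.symm) ha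
  · rw [litF, hua, if_neg (by simp)] at h1
    rw [litF, hva, if_pos rfl] at h2
    exact .eENeg₁ h2 h1
  · rw [litF, hua, if_pos rfl] at h1
    rw [litF, hva, if_neg (by simp)] at h2
    exact .eENeg₁ h1 h2
  · exact absurd (hua.trans hva.symm) ha

/-- Evaluation: the description of a world decides every formula over its atoms. -/
lemma eval_sigF {α : LForm A} (hsub : ∀ a ∈ latoms α, a ∈ S) (u : ↥S → Bool) :
    (α.truth (erW S u) = true → Deriv p {SForm.base (sigF p S u)} (.base α)) ∧
    (α.truth (erW S u) = false → Deriv p {SForm.base (sigF p S u)} (.base (.eneg α))) := by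
  set Δ₀ : Set (SForm A) := {SForm.base (sigF p S u)} with hΔ₀
  have hmem : SForm.base (sigF p S u) ∈ Δ₀ := rfl
  have hm1 : ∀ X : SForm A, Δ₀ ⊆ insert X (safePart Δ₀) := by
    intro X x hx
    rcases hx
    exact Set.mem_insert_of_mem _ (mem_safePart rfl (safe_base _))
  have hm2 : ∀ X Y : SForm A, Δ₀ ⊆ insert Y (safePart (insert X (safePart Δ₀))) := by
    intro X Y x hx
    rcases hx
    exact Set.mem_insert_of_mem _
      (mem_safePart (Set.mem_insert_of_mem _ (mem_safePart rfl (safe_base _))) (safe_base _))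
  induction α with
  | atom a =>
      have ha : a ∈ S := hsub a (List.mem_singleton.2 rfl)
      have htr : (LForm.atom a).truth (erW S u) = u ⟨a, ha⟩ := by
        simp [LForm.truth, erW, ha]
      have hl := deriv_litF hmem ⟨a, ha⟩
      constructor
      · intro h
        rw [htr] at h
        rwa [litF, h, if_pos rfl] at hl
      · intro h
        rw [htr] at h
        rwa [litF, h, if_neg (by simp)] at hl
  | eimp α β ih1 ih2 =>
      have hs1 : ∀ a ∈ latoms α, a ∈ S := fun a ha => hsub a (by simp [latoms, ha])
      have hs2 : ∀ a ∈ latoms β, a ∈ S := fun a ha => hsub a (by simp [latoms, ha])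
      constructor
      · intro h
        simp only [LForm.truth, Bool.or_eq_true, Bool.not_eq_true'] at h
        rcases hβ : β.truth (erW S u) with _ | _
        · have hα : α.truth (erW S u) = false := by
            rcases h with h | h
            · exact h
            · rw [h] at hβ; exact Bool.noConfusion hβ
          refine Deriv.iEImp ?_
          refine Deriv.efq (.eENeg₁ (.hyp (Set.mem_insert _ _)) ?_)
          exact ((ih1 hs1).2 hα).mono (hm1 _)
        · exact .iEImp (((ih2 hs2).1 hβ).mono (hm1 _))
      · intro h
        simp only [LForm.truth, Bool.or_eq_false_iff, Bool.not_eq_false'] at h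
        refine Deriv.iENeg ?_
        have hα : Deriv p (insert (SForm.base (α.eimp β)) (safePart Δ₀)) (.base α) :=
          ((ih1 hs1).1 h.1).mono (hm1 _)
        have hβ : Deriv p (insert (SForm.base (α.eimp β)) (safePart Δ₀)) (.base β) :=
          .eEImp hα (.hyp (Set.mem_insert _ _))
        exact .eENeg₁ hβ (((ih2 hs2).2 h.2).mono (hm1 _))
  | econj α β ih1 ih2 =>
      have hs1 : ∀ a ∈ latoms α, a ∈ S := fun a ha => hsub a (by simp [latoms, ha])
      have hs2 : ∀ a ∈ latoms β, a ∈ S := fun a ha => hsub a (by simp [latoms, ha])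
      constructor
      · intro h
        simp only [LForm.truth, Bool.and_eq_true] at h
        exact .iEConj ((ih1 hs1).1 h.1) ((ih2 hs2).1 h.2)
      · intro h
        simp only [LForm.truth, Bool.and_eq_false_iff] at h
        refine Deriv.iENeg ?_
        rcases h with h | h
        · exact .eENeg₁ (.eEConj₁ (.hyp (Set.mem_insert _ _))) (((ih1 hs1).2 h).mono (hm1 _))
        · exact .eENeg₁ (.eEConj₂ (.hyp (Set.mem_insert _ _))) (((ih2 hs2).2 h).mono (hm1 _))
  | edisj α β ih1 ih2 =>
      have hs1 : ∀ a ∈ latoms α, a ∈ S := fun a ha => hsub a (by simp [latoms, ha])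
      have hs2 : ∀ a ∈ latoms β, a ∈ S := fun a ha => hsub a (by simp [latoms, ha])
      constructor
      · intro h
        simp only [LForm.truth, Bool.or_eq_true] at h
        rcases h with h | h
        · exact .iEDisj₁ ((ih1 hs1).1 h)
        · exact .iEDisj₂ ((ih2 hs2).1 h)
      · intro h
        simp only [LForm.truth, Bool.or_eq_false_iff] at h
        refine Deriv.iENeg ?_
        refine Deriv.eEDisj (.hyp (Set.mem_insert _ _)) ?_ ?_
        · exact .eENeg₁ (.hyp (Set.mem_insert _ _)) (((ih1 hs1).2 h.1).mono (hm2 _ _))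
        · exact .eENeg₁ (.hyp (Set.mem_insert _ _)) (((ih2 hs2).2 h.2).mono (hm2 _ _))
  | eneg α ih =>
      have hs1 : ∀ a ∈ latoms α, a ∈ S := fun a ha => hsub a (by simp [latoms, ha])
      constructor
      · intro h
        simp only [LForm.truth, Bool.not_eq_true'] at h
        exact (ih hs1).2 h
      · intro h
        simp only [LForm.truth, Bool.not_eq_false'] at h
        refine Deriv.iENeg ?_
        exact .eENeg₁ (((ih hs1).1 h).mono (hm1 _)) (.hyp (Set.mem_insert _ _))

/-- Covering: the disjunction of all world descriptions is derivable. -/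
lemma coverAll :
    ∀ (rest : List ↥S) (c : ↥S → Bool) (Δ : Set (SForm A)),
    (∀ a : ↥S, a ∉ rest → SForm.base (litF S c a) ∈ Δ) →
    Deriv p Δ (.base (bigEDisj p ((Finset.univ : Finset (↥S → Bool)).toList.map (sigF p S))))
  | [], c, Δ, h => by
      refine deriv_bigEDisj_intro
        (List.mem_map_of_mem (Finset.mem_toList.2 (Finset.mem_univ c))) ?_
      refine deriv_bigEConj_intro ?_
      intro β hβ
      obtain ⟨a, _, rfl⟩ := List.mem_map.1 hβ
      exact .hyp (h a (List.not_mem_nil (a := a)))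
  | a :: rest, c, Δ, h => by
      refine (deriv_lem_atom (p := p) (Δ := Δ) a.1).eEDisj ?_ ?_
      · refine coverAll rest (Function.update c a true) _ ?_
        intro b hb
        by_cases hba : b = a
        · subst hba
          have : litF S (Function.update c b true) b = .atom b.1 := by
            rw [litF, Function.update_self, if_pos rfl]
          rw [this]
          exact Set.mem_insert _ _
        · have hblit : litF S (Function.update c a true) b = litF S c b := by
            rw [litF, litF, Function.update_of_ne hba]
          have hbmem : b ∉ a :: rest := by
            simp only [List.mem_cons, not_or]
            exact ⟨hba, hb⟩
          rw [hblit]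
          exact Set.mem_insert_of_mem _ (mem_safePart (h b hbmem) (safe_base _))
      · refine coverAll rest (Function.update c a false) _ ?_
        intro b hb
        by_cases hba : b = a
        · subst hba
          have : litF S (Function.update c b false) b = .eneg (.atom b.1) := by
            rw [litF, Function.update_self, if_neg (by simp)]
          rw [this]
          exact Set.mem_insert _ _
        · have hblit : litF S (Function.update c a false) b = litF S c b := by
            rw [litF, litF, Function.update_of_ne hba]
          have hbmem : b ∉ a :: rest := by
            simp only [List.mem_cons, not_or]
            exact ⟨hba, hb⟩
          rw [hblit]
          exact Set.mem_insert_of_mem _ (mem_safePart (h b hbmem) (safe_base _))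

/-- The tautology: some world description holds. -/
lemma deriv_taut_sig :
    Deriv p Δ (.base (bigEDisj p ((Finset.univ : Finset (↥S → Bool)).toList.map (sigF p S)))) :=
  coverAll Finset.univ.toList (fun _ => false) Δ
    (fun a ha => absurd (Finset.mem_toList.2 (Finset.mem_univ a)) ha)

end Engine

/- ============ Stage 6: mu machinery ============ -/

section Mu
variable [DecidableEq A] {p : A} {S : Finset A} {Δ : Set (SForm A)}
set_option linter.unusedSectionVars false

lemma muC_base {C : Finset (↥S → Bool)} (h : muC p S C ∈ Δ) :
    Deriv p Δ (.base (bigEDisj p (C.toList.map (sigF p S)))) :=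
  .eIConj₁ (.hyp h)

lemma muC_dia {C : Finset (↥S → Bool)} (h : muC p S C ∈ Δ) {u : ↥S → Bool} (hu : u ∈ C) :
    Deriv p Δ (dia p (.base (sigF p S u))) := by
  have h2 : Deriv p Δ (bigIConj p ((C.toList.map (sigF p S)).map (fun α => dia p (.base α)))) :=
    .eIConj₂ (.hyp h)
  exact deriv_bigIConj_elim h2 _
    (List.mem_map.2 ⟨sigF p S u, List.mem_map_of_mem (Finset.mem_toList.2 hu), rfl⟩)

lemma muC_intro {C : Finset (↥S → Bool)}
    (hK : ∀ u ∈ C, dia p (.base (sigF p S u)) ∈ Δ)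
    (hL : ∀ u : ↥S → Bool, u ∉ C → SForm.iimp (.base (sigF p S u)) (botF p) ∈ Δ) :
    Deriv p Δ (muC p S C) := by
  refine .iIConj ?_ ?_
  · refine deriv_bigEDisj_elim (deriv_taut_sig (S := S)) ?_
    intro α hα
    obtain ⟨u, _, rfl⟩ := List.mem_map.1 hα
    by_cases hu : u ∈ C
    · exact deriv_bigEDisj_intro (List.mem_map_of_mem (Finset.mem_toList.2 hu))
        (.hyp (Set.mem_insert _ _))
    · exact .efq (.eIImp (.hyp (Set.mem_insert _ _))
        (.hyp (Set.mem_insert_of_mem _ (mem_safePart (hL u hu) (safe_iimp _ _)))))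
  · refine deriv_bigIConj_intro ?_
    intro θ hθ
    obtain ⟨α, hα, rfl⟩ := List.mem_map.1 hθ
    obtain ⟨u, hu, rfl⟩ := List.mem_map.1 hα
    exact .hyp (hK u (Finset.mem_toList.1 hu))

lemma deriv_allImpBot
    (hL : ∀ u : ↥S → Bool, SForm.iimp (.base (sigF p S u)) (botF p) ∈ Δ) :
    Deriv p Δ (botF p) := by
  refine deriv_bigEDisj_elim (deriv_taut_sig (S := S)) ?_
  intro α hα
  obtain ⟨u, _, rfl⟩ := List.mem_map.1 hα
  exact .eIImp (.hyp (Set.mem_insert _ _))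
    (.hyp (Set.mem_insert_of_mem _ (mem_safePart (hL u) (safe_iimp _ _))))

/-- From ◇σ_u and the description of a set not containing u, derive ⊥. -/
lemma dia_out_clash {u : ↥S → Bool} {D : Finset (↥S → Bool)} (hu : u ∉ D)
    (hdia : Deriv p Δ (dia p (.base (sigF p S u))))
    (hβ : Deriv p Δ (.base (bigEDisj p (D.toList.map (sigF p S))))) :
    Deriv p Δ (botF p) := by
  refine hβ.cut ?_
  set β : SForm A := .base (bigEDisj p (D.toList.map (sigF p S))) with hβd
  set Δ₁ : Set (SForm A) := insert β Δ with hΔ₁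
  have himp : Deriv p Δ₁ (.iimp (.base (sigF p S u)) (botF p)) := by
    refine Deriv.iIImp ?_
    set Δ₂ : Set (SForm A) := insert (SForm.base (sigF p S u)) (safePart Δ₁) with hΔ₂
    have hβ2 : β ∈ Δ₂ :=
      Set.mem_insert_of_mem _ (mem_safePart (Set.mem_insert _ _) (safe_base _))
    refine deriv_bigEDisj_elim (.hyp hβ2) ?_
    intro α hα
    obtain ⟨v, hv, rfl⟩ := List.mem_map.1 hα
    have hvD : v ∈ D := Finset.mem_toList.1 hv
    have hne : u ≠ v := fun h => hu (h ▸ hvD)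
    exact sigF_clash hne
      (Set.mem_insert_of_mem _ (mem_safePart (Set.mem_insert _ _) (safe_base _)))
      (Set.mem_insert _ _)
  exact .eINeg himp (hdia.mono (Set.subset_insert _ _))

/-- Distinct μ-formulas clash. -/
lemma muC_clash {C D : Finset (↥S → Bool)} (hCD : C ≠ D)
    (hC : muC p S C ∈ Δ) (hD : muC p S D ∈ Δ) : Deriv p Δ (botF p) := by
  have : (∃ u, u ∈ C ∧ u ∉ D) ∨ (∃ u, u ∈ D ∧ u ∉ C) := by
    by_contra hcon
    push_neg at hcon
    exact hCD (Finset.ext fun u => ⟨fun h => hcon.1 u h, fun h => hcon.2 u h⟩)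
  rcases this with ⟨u, h1, h2⟩ | ⟨u, h1, h2⟩
  · exact dia_out_clash h2 (muC_dia hC h1) (muC_base hD)
  · exact dia_out_clash h2 (muC_dia hD h1) (muC_base hC)

lemma deriv_dia_muC' {D : Finset (↥S → Bool)}
    (hdia : ∀ u ∈ D, Deriv p Δ (dia p (.base (sigF p S u)))) (hne : D.Nonempty) :
    Deriv p Δ (dia p (muC p S D)) := by
  have hl : Deriv p Δ
      (bigIConj p ((D.toList.map (sigF p S)).map (fun α => dia p (.base α)))) := by
    refine deriv_bigIConj_intro ?_
    intro θ hθ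
    obtain ⟨α, hα, rfl⟩ := List.mem_map.1 hθ
    obtain ⟨u, hu, rfl⟩ := List.mem_map.1 hα
    exact hdia u (Finset.mem_toList.1 hu)
  have hnil : D.toList.map (sigF p S) ≠ [] := by
    simp only [ne_eq, List.map_eq_nil_iff, Finset.toList_eq_nil]
    exact hne.ne_empty
  exact Deriv.diaOplus hnil hl

lemma deriv_dia_muC {C D : Finset (↥S → Bool)} (hC : muC p S C ∈ Δ) (hDC : D ⊆ C)
    (hne : D.Nonempty) : Deriv p Δ (dia p (muC p S D)) :=
  deriv_dia_muC' (fun u hu => muC_dia hC (hDC hu)) hne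

/-- Case split on which world descriptions are possible. -/
lemma cemSplit (χ : SForm A) :
    ∀ (rest : List (↥S → Bool)) (K L : Finset (↥S → Bool)) (Δ : Set (SForm A)),
    (∀ u ∈ K, dia p (.base (sigF p S u)) ∈ Δ) →
    (∀ u ∈ L, SForm.iimp (.base (sigF p S u)) (botF p) ∈ Δ) →
    (∀ (Δ' : Set (SForm A)) (K' L' : Finset (↥S → Bool)), Δ ⊆ Δ' → K ⊆ K' → L ⊆ L' →
      (∀ u ∈ rest, u ∈ K' ∨ u ∈ L') →
      (∀ u ∈ K', dia p (.base (sigF p S u)) ∈ Δ') →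
      (∀ u ∈ L', SForm.iimp (.base (sigF p S u)) (botF p) ∈ Δ') →
      Deriv p Δ' χ) →
    Deriv p Δ χ
  | [], K, L, Δ, hK, hL, cont =>
      cont Δ K L (le_refl _) (le_refl _) (le_refl _) (by simp) hK hL
  | a :: rest, K, L, Δ, hK, hL, cont => by
      have hc : Deriv p Δ
          (.idisj (.iimp (.base (sigF p S a)) (botF p)) (dia p (.base (sigF p S a)))) := .cem
      refine hc.eIDisj ?_ ?_
      · refine cemSplit χ rest K (insert a L) _
          (fun u hu => Set.mem_insert_of_mem _ (hK u hu)) ?_ ?_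
        · intro u hu
          rcases Finset.mem_insert.1 hu with rfl | hu
          · exact Set.mem_insert _ _
          · exact Set.mem_insert_of_mem _ (hL u hu)
        · intro Δ' K' L' hΔ hK' hL' hcov hdia himp
          refine cont Δ' K' L' ((Set.subset_insert _ _).trans hΔ) hK'
            ((Finset.subset_insert _ _).trans hL') ?_ hdia himp
          intro u hu
          rcases List.mem_cons.1 hu with rfl | hu
          · exact Or.inr (hL' (Finset.mem_insert_self _ _))
          · exact hcov u hu
      · refine cemSplit χ rest (insert a K) L _ ?_
          (fun u hu => Set.mem_insert_of_mem _ (hL u hu)) ?_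
        · intro u hu
          rcases Finset.mem_insert.1 hu with rfl | hu
          · exact Set.mem_insert _ _
          · exact Set.mem_insert_of_mem _ (hK u hu)
        · intro Δ' K' L' hΔ hK' hL' hcov hdia himp
          refine cont Δ' K' L' ((Set.subset_insert _ _).trans hΔ)
            ((Finset.subset_insert _ _).trans hK') hL' ?_ hdia himp
          intro u hu
          rcases List.mem_cons.1 hu with rfl | hu
          · exact Or.inl (hK' (Finset.mem_insert_self _ _))
          · exact hcov u hu

/-- Full split: every derivation goal can be reduced to contexts with complete
possibility information. -/
lemma fullSplit {χ : SForm A}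
    (cont : ∀ (Δ' : Set (SForm A)) (C : Finset (↥S → Bool)), Δ ⊆ Δ' →
      (∀ u ∈ C, dia p (.base (sigF p S u)) ∈ Δ') →
      (∀ u ∉ C, SForm.iimp (.base (sigF p S u)) (botF p) ∈ Δ') →
      Deriv p Δ' χ) : Deriv p Δ χ := by
  refine cemSplit (S := S) χ Finset.univ.toList ∅ ∅ Δ (by simp) (by simp) ?_
  intro Δ' K' L' h1 _ _ hcov hdia himp
  refine cont Δ' K' h1 hdia ?_
  intro u hu
  exact himp u ((hcov u (Finset.mem_toList.2 (Finset.mem_univ u))).resolve_left hu)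

end Mu

/- ============ Stage 7: equivalence pairs ============ -/

section EqPairs
variable [DecidableEq A]
set_option linter.unusedSectionVars false

/-- φ is provably equivalent to the canonical formula of X. -/
def EqPair (p : A) (S : Finset A) (φ : SForm A) (X : Finset (Finset (↥S → Bool))) : Prop :=
  Deriv p {φ} (xiX p S X) ∧ Deriv p {xiX p S X} φ

variable {p : A} {S : Finset A} {Δ : Set (SForm A)} {φ ψ χ : SForm A}
variable {X X1 X2 : Finset (Finset (↥S → Bool))}

lemma Deriv.compose (h1 : Deriv p Δ φ) (h2 : Deriv p {φ} χ) : Deriv p Δ χ :=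
  h1.cut (h2.mono (fun x hx => by rcases hx; exact Set.mem_insert _ _))

lemma xi_intro {C : Finset (↥S → Bool)} (hC : C ∈ X) (h : Deriv p Δ (muC p S C)) :
    Deriv p Δ (xiX p S X) :=
  deriv_bigIDisj_intro (List.mem_map_of_mem (Finset.mem_toList.2 hC)) h

lemma xi_elim (h : Deriv p Δ (xiX p S X))
    (hbr : ∀ C ∈ X, Deriv p (insert (muC p S C) Δ) χ) : Deriv p Δ χ := by
  refine deriv_bigIDisj_elim h ?_
  intro θ hθ
  obtain ⟨C, hC, rfl⟩ := List.mem_map.1 hθ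
  exact hbr C (Finset.mem_toList.1 hC)

lemma eqpair_congr (hX : X1 = X2) (h : EqPair p S φ X1) : EqPair p S φ X2 := hX ▸ h

lemma eqpair_equiv (hfw : Deriv p {φ} ψ) (hbw : Deriv p {ψ} φ) (h : EqPair p S ψ X) :
    EqPair p S φ X :=
  ⟨hfw.compose h.1, h.2.compose hbw⟩

open Classical in
/-- Canonical set for ◇. -/
noncomputable def Xdia (X1 : Finset (Finset (↥S → Bool))) : Finset (Finset (↥S → Bool)) :=
  Finset.univ.filter (fun C => C.Nonempty ∧ ∃ D ⊆ C, D.Nonempty ∧ D ∈ X1)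

open Classical in
/-- Canonical set for →. -/
noncomputable def Ximp (X1 X2 : Finset (Finset (↥S → Bool))) : Finset (Finset (↥S → Bool)) :=
  Finset.univ.filter (fun C => C.Nonempty ∧ ∀ D ⊆ C, D.Nonempty → D ∈ X1 → D ∈ X2)

lemma mem_Xdia {C : Finset (↥S → Bool)} :
    C ∈ Xdia X1 ↔ C.Nonempty ∧ ∃ D ⊆ C, D.Nonempty ∧ D ∈ X1 := by
  classical
  simp [Xdia]

lemma mem_Ximp {C : Finset (↥S → Bool)} :
    C ∈ Ximp X1 X2 ↔ C.Nonempty ∧ ∀ D ⊆ C, D.Nonempty → D ∈ X1 → D ∈ X2 := by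
  classical
  simp [Ximp]

lemma Xs_dia_eq {χ : SForm A} : Xs S (dia p χ) = Xdia (Xs S χ) := by
  ext C
  rw [mem_Xs_dia, mem_Xdia]

lemma Xs_iimp_eq {φ ψ : SForm A} : Xs S (.iimp φ ψ) = Ximp (Xs S φ) (Xs S ψ) := by
  ext C
  rw [mem_Xs_iimp, mem_Ximp]

lemma Ys_iimp_eq {φ ψ : SForm A} :
    Ys S (.iimp φ ψ) = Xdia (Xs S φ ∩ Ys S ψ) := by
  ext C
  rw [mem_Ys_iimp, mem_Xdia]
  refine and_congr_right fun _ => ?_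
  constructor
  · rintro ⟨D, hDC, hne, h1, h2⟩
    exact ⟨D, hDC, hne, Finset.mem_inter.2 ⟨h1, h2⟩⟩
  · rintro ⟨D, hDC, hne, h⟩
    exact ⟨D, hDC, hne, (Finset.mem_inter.1 h).1, (Finset.mem_inter.1 h).2⟩

/-- Base case of the canonical equivalence. -/
lemma eqpair_base {α : LForm A} (hsub : ∀ a ∈ latoms α, a ∈ S) :
    EqPair p S (.base α) (Xs S (.base α)) := by
  constructor
  · -- forward
    refine fullSplit (S := S) ?_
    intro Δ' C hΔ hdia himp
    by_cases hCne : C.Nonempty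
    · by_cases hall : ∀ u ∈ C, α.truth (erW S u) = true
      · exact xi_intro (mem_Xs_base.2 ⟨hCne, hall⟩) (muC_intro hdia himp)
      · push_neg at hall
        obtain ⟨u, hu, htr⟩ := hall
        replace htr : LForm.truth (erW S u) α = false := by
          rcases h : LForm.truth (erW S u) α with _ | _
          · rfl
          · exact absurd h htr
        refine Deriv.efq (.eINeg ?_ (.hyp (hdia u hu)))
        refine Deriv.iIImp ?_
        have hαmem : SForm.base α ∈ insert (SForm.base (sigF p S u)) (safePart Δ') :=
          Set.mem_insert_of_mem _ (mem_safePart (hΔ (Set.mem_singleton _)) (safe_base _))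
        refine Deriv.eENeg₁ (.hyp hαmem) ?_
        exact ((eval_sigF hsub u).2 htr).mono
          (fun x hx => by rcases hx; exact Set.mem_insert _ _)
    · refine Deriv.efq (deriv_allImpBot (S := S) ?_)
      exact fun u => himp u (fun hu => hCne ⟨u, hu⟩)
  · -- backward
    refine xi_elim (.hyp (Set.mem_singleton _)) ?_
    intro C hC
    have hall := (mem_Xs_base.1 hC).2
    refine deriv_bigEDisj_elim (muC_base (Set.mem_insert _ _)) ?_
    intro β hβ
    obtain ⟨u, hu, rfl⟩ := List.mem_map.1 hβ
    exact ((eval_sigF hsub u).1 (hall u (Finset.mem_toList.1 hu))).mono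
      (fun x hx => by rcases hx; exact Set.mem_insert _ _)

/-- Conjunction combination. -/
lemma eqpair_conj (h1 : EqPair p S φ X1) (h2 : EqPair p S ψ X2) :
    EqPair p S (.iconj φ ψ) (X1 ∩ X2) := by
  constructor
  · have hξ1 : Deriv p {SForm.iconj φ ψ} (xiX p S X1) :=
      (Deriv.eIConj₁ (ψ := ψ) (.hyp (Set.mem_singleton _))).compose h1.1
    refine xi_elim hξ1 ?_
    intro C hC
    have hξ2 : Deriv p (insert (muC p S C) {SForm.iconj φ ψ}) (xiX p S X2) :=
      (Deriv.eIConj₂ (φ := φ) (.hyp (Set.mem_insert_of_mem _ (Set.mem_singleton _)))).compose h2.1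
    refine xi_elim hξ2 ?_
    intro D hD
    by_cases hCD : C = D
    · subst hCD
      exact xi_intro (Finset.mem_inter.2 ⟨hC, hD⟩) (.hyp (Set.mem_insert _ _))
    · exact .efq (muC_clash hCD
        (Set.mem_insert_of_mem _ (Set.mem_insert _ _)) (Set.mem_insert _ _))
  · refine xi_elim (.hyp (Set.mem_singleton _)) ?_
    intro C hC
    refine Deriv.iIConj ?_ ?_
    · exact (xi_intro (Finset.mem_inter.1 hC).1 (.hyp (Set.mem_insert _ _))).compose h1.2
    · exact (xi_intro (Finset.mem_inter.1 hC).2 (.hyp (Set.mem_insert _ _))).compose h2.2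

/-- Disjunction combination. -/
lemma eqpair_disj (h1 : EqPair p S φ X1) (h2 : EqPair p S ψ X2) :
    EqPair p S (.idisj φ ψ) (X1 ∪ X2) := by
  constructor
  · refine Deriv.eIDisj (.hyp (Set.mem_singleton _)) ?_ ?_
    · refine xi_elim ((Deriv.hyp (Set.mem_insert _ _)).compose h1.1) ?_
      intro C hC
      exact xi_intro (Finset.mem_union_left _ hC) (.hyp (Set.mem_insert _ _))
    · refine xi_elim ((Deriv.hyp (Set.mem_insert _ _)).compose h2.1) ?_
      intro C hC
      exact xi_intro (Finset.mem_union_right _ hC) (.hyp (Set.mem_insert _ _))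
  · refine xi_elim (.hyp (Set.mem_singleton _)) ?_
    intro C hC
    rcases Finset.mem_union.1 hC with hC | hC
    · exact .iIDisj₁ ((xi_intro hC (.hyp (Set.mem_insert _ _))).compose h1.2)
    · exact .iIDisj₂ ((xi_intro hC (.hyp (Set.mem_insert _ _))).compose h2.2)

/-- ◇ combination. -/
lemma eqpair_dia (h : EqPair p S χ X1) (hX1 : ∀ D ∈ X1, D.Nonempty) :
    EqPair p S (dia p χ) (Xdia X1) := by
  constructor
  · refine fullSplit (S := S) ?_
    intro Δ' C hΔ hdia himp
    by_cases hmem : C ∈ Xdia X1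
    · exact xi_intro hmem (muC_intro hdia himp)
    · by_cases hCne : C.Nonempty
      · have hno : ∀ D ⊆ C, D.Nonempty → D ∉ X1 := by
          intro D hDC hDne hDX
          exact hmem (mem_Xdia.2 ⟨hCne, D, hDC, hDne, hDX⟩)
        refine Deriv.efq (.eINeg ?_ (.hyp (hΔ (Set.mem_singleton _))))
        refine Deriv.iIImp ?_
        have hξ : Deriv p (insert χ (safePart Δ')) (xiX p S X1) :=
          (Deriv.hyp (Set.mem_insert _ _)).compose h.1
        refine xi_elim hξ ?_
        intro D hD
        have hDne := hX1 D hD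
        have hDC : ¬D ⊆ C := fun hsub => hno D hsub hDne hD
        obtain ⟨u, huD, huC⟩ := Finset.not_subset.1 hDC
        have hdiau : Deriv p (insert (muC p S D) (insert χ (safePart Δ')))
            (dia p (.base (sigF p S u))) := muC_dia (Set.mem_insert _ _) huD
        have himpu : SForm.iimp (.base (sigF p S u)) (botF p) ∈
            insert (muC p S D) (insert χ (safePart Δ')) :=
          Set.mem_insert_of_mem _ (Set.mem_insert_of_mem _
            (mem_safePart (himp u huC) (safe_iimp _ _)))
        exact .eINeg (.hyp himpu) hdiau
      · refine Deriv.efq (deriv_allImpBot (S := S) ?_)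
        exact fun u => himp u (fun hu => hCne ⟨u, hu⟩)
  · refine xi_elim (.hyp (Set.mem_singleton _)) ?_
    intro C hC
    obtain ⟨_, D, hDC, hDne, hDX⟩ := mem_Xdia.1 hC
    have hmu : Deriv p {muC p S D} χ := (xi_intro hDX (.hyp (Set.mem_singleton _))).compose h.2
    refine deriv_diaMono hmu ?_
    refine deriv_dia_muC (Set.mem_insert _ _) hDC hDne

/-- → combination. -/
lemma eqpair_imp (h1 : EqPair p S φ X1) (h2 : EqPair p S ψ X2)
    (hX1 : ∀ D ∈ X1, D.Nonempty) :
    EqPair p S (.iimp φ ψ) (Ximp X1 X2) := by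
  constructor
  · refine fullSplit (S := S) ?_
    intro Δ' C hΔ hdia himp
    by_cases hmem : C ∈ Ximp X1 X2
    · exact xi_intro hmem (muC_intro hdia himp)
    · by_cases hCne : C.Nonempty
      · have : ∃ D ⊆ C, D.Nonempty ∧ D ∈ X1 ∧ D ∉ X2 := by
          by_contra hcon
          push_neg at hcon
          exact hmem (mem_Ximp.2 ⟨hCne, fun D hDC hDne hDX => hcon D hDC hDne hDX⟩)
        obtain ⟨D, hDC, hDne, hDX1, hDX2⟩ := this
        have hdiaD : Deriv p Δ' (dia p (muC p S D)) := by
          refine deriv_dia_muC' (fun u hu => .hyp (hdia u (hDC hu))) hDne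
        refine Deriv.efq (.eINeg ?_ hdiaD)
        refine Deriv.iIImp ?_
        set Δ₂ : Set (SForm A) := insert (muC p S D) (safePart Δ') with hΔ₂
        have hφ : Deriv p Δ₂ φ := (xi_intro hDX1 (.hyp (Set.mem_insert _ _))).compose h1.2
        have himpmem : SForm.iimp φ ψ ∈ Δ₂ :=
          Set.mem_insert_of_mem _ (mem_safePart (hΔ (Set.mem_singleton _)) (safe_iimp _ _))
        have hψ : Deriv p Δ₂ ψ := .eIImp hφ (.hyp himpmem)
        refine xi_elim (hψ.compose h2.1) ?_
        intro E hE
        have hED : E ≠ D := fun h => hDX2 (h ▸ hE)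
        exact muC_clash hED (Set.mem_insert _ _)
          (Set.mem_insert_of_mem _ (Set.mem_insert _ _))
      · refine Deriv.efq (deriv_allImpBot (S := S) ?_)
        exact fun u => himp u (fun hu => hCne ⟨u, hu⟩)
  · refine xi_elim (.hyp (Set.mem_singleton _)) ?_
    intro C hC
    have hCprop := (mem_Ximp.1 hC).2
    refine (muC_base (Set.mem_insert _ _)).cut ?_
    set βC : SForm A := .base (bigEDisj p (C.toList.map (sigF p S))) with hβC
    refine Deriv.iIImp ?_
    set Δ₃ : Set (SForm A) :=
      insert φ (safePart (insert βC (insert (muC p S C) {xiX p S (Ximp X1 X2)}))) with hΔ₃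
    have hβmem : βC ∈ Δ₃ :=
      Set.mem_insert_of_mem _ (mem_safePart (Set.mem_insert _ _) (safe_base _))
    have hξ1 : Deriv p Δ₃ (xiX p S X1) := (Deriv.hyp (Set.mem_insert _ _)).compose h1.1
    refine xi_elim hξ1 ?_
    intro D hD
    by_cases hDC : D ⊆ C
    · have hD2 : D ∈ X2 := hCprop D hDC (hX1 D hD) hD
      exact (xi_intro hD2 (.hyp (Set.mem_insert _ _))).compose h2.2
    · obtain ⟨u, huD, huC⟩ := Finset.not_subset.1 hDC
      refine Deriv.efq (dia_out_clash huC (muC_dia (Set.mem_insert _ _) huD) ?_)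
      · exact .hyp (Set.mem_insert_of_mem _ hβmem)

end EqPairs

/- ============ Stage 8: main equivalence and completeness ============ -/

section Main
variable [DecidableEq A] {p : A} {S : Finset A}
set_option linter.unusedSectionVars false

lemma safe_ineg_base (α : LForm A) : Safe (SForm.ineg (.base α)) := Or.inl rfl

lemma Xs_NE {φ : SForm A} : ∀ D ∈ Xs S φ, D.Nonempty := fun _ hD => (mem_Xs.1 hD).1

lemma deriv_ineg_base_fw {α : LForm A} :
    Deriv p {SForm.ineg (.base α)} (.base (.eneg α)) := by
  refine Deriv.iENeg ?_
  refine Deriv.eINeg (φ := .base α) (.hyp (Set.mem_insert _ _)) (.hyp ?_)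
  exact Set.mem_insert_of_mem _ (mem_safePart (Set.mem_singleton _) (safe_ineg_base α))

lemma deriv_ineg_base_bw {α : LForm A} :
    Deriv p {SForm.base (.eneg α)} (.ineg (.base α)) := by
  refine Deriv.iINeg ?_
  exact .eENeg₁ (.hyp (Set.mem_insert _ _))
    (.hyp (Set.mem_insert_of_mem _ (mem_safePart (Set.mem_singleton _) (safe_base _))))

/-- The main canonical-equivalence theorem, by induction on the formula. -/
lemma main_eq (φ : SForm A) (hsub : ∀ a ∈ satoms φ, a ∈ S) :
    EqPair p S φ (Xs S φ) ∧ EqPair p S (.ineg φ) (Ys S φ) := by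
  induction φ with
  | base α =>
      refine ⟨eqpair_base hsub, ?_⟩
      have h := eqpair_base (p := p) (α := LForm.eneg α) hsub
      exact eqpair_congr Ys_base.symm (eqpair_equiv deriv_ineg_base_fw deriv_ineg_base_bw h)
  | iimp φ ψ ih1 ih2 =>
      have h1 := ih1 (fun a ha => hsub a (by simp [satoms, ha]))
      have h2 := ih2 (fun a ha => hsub a (by simp [satoms, ha]))
      constructor
      · exact eqpair_congr Xs_iimp_eq.symm (eqpair_imp h1.1 h2.1 Xs_NE)
      · have hχ : EqPair p S (.iconj φ (.ineg ψ)) (Xs S φ ∩ Ys S ψ) :=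
          eqpair_conj h1.1 h2.2
        have hdia := eqpair_dia hχ
          (fun D hD => (mem_Xs.1 (Finset.mem_inter.1 hD).1).1)
        refine eqpair_congr Ys_iimp_eq.symm ?_
        exact eqpair_equiv (.negImp₁ (.hyp (Set.mem_singleton _)))
          (.negImp₂ (.hyp (Set.mem_singleton _))) hdia
  | iconj φ ψ ih1 ih2 =>
      have h1 := ih1 (fun a ha => hsub a (by simp [satoms, ha]))
      have h2 := ih2 (fun a ha => hsub a (by simp [satoms, ha]))
      constructor
      · exact eqpair_congr Xs_iconj.symm (eqpair_conj h1.1 h2.1)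
      · refine eqpair_congr Ys_iconj.symm ?_
        exact eqpair_equiv (.negConj₁ (.hyp (Set.mem_singleton _)))
          (.negConj₂ (.hyp (Set.mem_singleton _))) (eqpair_disj h1.2 h2.2)
  | idisj φ ψ ih1 ih2 =>
      have h1 := ih1 (fun a ha => hsub a (by simp [satoms, ha]))
      have h2 := ih2 (fun a ha => hsub a (by simp [satoms, ha]))
      constructor
      · exact eqpair_congr Xs_idisj.symm (eqpair_disj h1.1 h2.1)
      · refine eqpair_congr Ys_idisj.symm ?_
        exact eqpair_equiv (.negDisj₁ (.hyp (Set.mem_singleton _)))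
          (.negDisj₂ (.hyp (Set.mem_singleton _))) (eqpair_conj h1.2 h2.2)
  | ineg φ ih =>
      have h := ih (fun a ha => hsub a (by simpa [satoms] using ha))
      constructor
      · exact eqpair_congr Xs_ineg.symm h.2
      · refine eqpair_congr Ys_ineg.symm ?_
        exact eqpair_equiv (.negNeg₁ (.hyp (Set.mem_singleton _)))
          (.negNeg₂ (.hyp (Set.mem_singleton _))) h.1

lemma satoms_foldl_iconj {t : List (SForm A)} {acc : SForm A} :
    ∀ a ∈ satoms (t.foldl .iconj acc), a ∈ satoms acc ∨ ∃ θ ∈ t, a ∈ satoms θ := by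
  induction t generalizing acc with
  | nil => exact fun a ha => Or.inl ha
  | cons b t ih =>
      intro a ha
      rcases ih a ha with h | ⟨θ, hθ, h⟩
      · rcases List.mem_append.1 h with h | h
        · exact Or.inl h
        · exact Or.inr ⟨b, .head _, h⟩
      · exact Or.inr ⟨θ, .tail _ hθ, h⟩

lemma satoms_bigIConj {L : List (SForm A)} :
    ∀ a ∈ satoms (bigIConj p L), a = p ∨ ∃ θ ∈ L, a ∈ satoms θ := by
  cases L with
  | nil =>
      intro a ha
      left
      simpa [bigIConj, satoms, latoms] using ha
  | cons b t =>
      intro a ha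
      rcases satoms_foldl_iconj a ha with h | ⟨θ, hθ, h⟩
      · exact Or.inr ⟨b, .head _, h⟩
      · exact Or.inr ⟨θ, .tail _ hθ, h⟩

end Main

/-- Completeness. -/
theorem Deriv.complete [DecidableEq A] {p : A} {l : List (SForm A)} {ψ : SForm A}
    (h : Entails {φ | φ ∈ l} ψ) : Deriv p {φ | φ ∈ l} ψ := by
  classical
  set S : Finset A := insert p (satoms ψ ++ l.flatMap satoms).toFinset with hS
  have hsubψ : ∀ a ∈ satoms ψ, a ∈ S := by
    intro a ha
    simp only [hS, Finset.mem_insert, List.mem_toFinset, List.mem_append]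
    exact Or.inr (Or.inl ha)
  have hsubΦ : ∀ a ∈ satoms (bigIConj p l), a ∈ S := by
    intro a ha
    rcases satoms_bigIConj a ha with rfl | ⟨θ, hθ, hmem⟩
    · exact Finset.mem_insert_self _ _
    · simp only [hS, Finset.mem_insert, List.mem_toFinset, List.mem_append]
      exact Or.inr (Or.inr (List.mem_flatMap.2 ⟨θ, hθ, hmem⟩))
  have hΦ : Deriv p {φ | φ ∈ l} (bigIConj p l) :=
    deriv_bigIConj_intro (fun θ hθ => .hyp hθ)
  have hmainΦ := (main_eq (S := S) (p := p) (bigIConj p l) hsubΦ).1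
  have hmainψ := (main_eq (S := S) (p := p) ψ hsubψ).1
  refine xi_elim (hΦ.compose hmainΦ.1) ?_
  intro C hC
  obtain ⟨hCne, hCassert⟩ := mem_Xs.1 hC
  have hψa : Assert (ectx S C) ψ := by
    refine h (ectx S C) (ectx_nonempty.2 hCne) ?_
    intro δ hδ
    exact assert_bigIConj.1 hCassert δ hδ
  exact (xi_intro (mem_Xs.2 ⟨hCne, hψa⟩) (.hyp (Set.mem_insert _ _))).compose hmainψ.2


theorem soundness_and_completeness (p : A) (l : List (SForm A)) (ψ : SForm A) :
    Deriv p {φ | φ ∈ l} ψ ↔ Entails {φ | φ ∈ l} ψ := by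
  letI := Classical.decEq A
  exact ⟨fun h => h.sound, fun h => Deriv.complete h⟩

end LAD
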